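/- arXiv:2312.13175 — 4 statements merged into one kernel-verified Lean document; each statement's English description precedes it below -/
import Mathlib

section
/- (Proposition 1, forward direction, explicit bound) Let Assumption 1 (i-IOSS Lyapunov function U) and Assumption 3 (uniform persistent excitation with index T ∈ ℕ) hold, and assume η̃ := max{η_x,η_p} > 0. Define c₁' := (1/(1−η_x)+1)·λ_max(S_x,S_p), P̃₁ := U_hi + c₁'P_p, Q̃ := Q_x + c₁'Q_p, R̃ := R_x + c₁'R_p, c₂ := min{λ_min(U_lo), λ_min(S_x)}, and c₃ := max{λ_max(P̃₁), λ_max(S_x)·η̃^{1−T}·(1/(1−η_x)+1)}. Then for every K ∈ ℕ, every pair of length-K trajectories {(x_s,u_s,w_s,p)}, {(x̃_s,u_s,w̃_s,p̃)} in ℤ satisfying the system dynamics with common inputs and with outputs y_s, ỹ_s, and for all t ∈ [0,K]: c₂(‖x_t−x̃_t‖² + ‖p−p̃‖²) ≤ c₃ η̃^t (‖x_0−x̃_0‖² + ‖p−p̃‖²) + Σ_{j=1}^{t} η̃^{j−1}(‖w_{t−j}−w̃_{t−j}‖²_{Q̃} + ‖y_{t−j}−ỹ_{t−j}‖²_{R̃});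 that is, the augmented system with state (x,p) is exponentially i-IOSS. -/
/-!
Iterating the dissipation inequality of `U` along the two trajectories bounds `U(x_t, x̃_t)` by a
decaying initial term plus a geometric sum in which the parameter error acts as a constant input,
of total weight at most `‖p − p̃‖²_{S_x} / (1 − η_x)`. That parameter term is then removed in two
regimes. For `t ≥ T`, persistent excitation bounds `‖p − p̃‖²_{S_p}`, hence
`‖p − p̃‖²_{S_x} ≤ λ_max(S_x,S_p) ‖p − p̃‖²_{S_p}`, by discounted initial-state, disturbance and
output errors. For `t < T` it is bounded by `λ_max(S_x) ‖p − p̃‖²`, and `η̃^{1−T} η̃^t ≥ 1` turns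
this into a decaying term. Dominating `η_x` and `η_p` by `η̃` merges all terms.
-/

open Matrix Finset

/-- Weighted squared norm `‖v‖_Q² = vᵀ Q v`. -/
noncomputable def quad {ι : Type*} [Fintype ι] (Q : Matrix ι ι ℝ) (v : ι → ℝ) : ℝ :=
  v ⬝ᵥ Q.mulVec v

/-- Membership in the constraint set `ℤ = {(x,u,w,p) ∈ 𝕏×𝕌×𝕎×ℙ : f(x,u,w,p) ∈ 𝕏}`. -/
def ZmemS {n m q o : ℕ}
    (f : (Fin n → ℝ) → (Fin m → ℝ) → (Fin q → ℝ) → (Fin o → ℝ) → (Fin n → ℝ))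
    (Xs : Set (Fin n → ℝ)) (Us : Set (Fin m → ℝ)) (Ws : Set (Fin q → ℝ))
    (Ps : Set (Fin o → ℝ))
    (xx : Fin n → ℝ) (uu : Fin m → ℝ) (ww : Fin q → ℝ) (pp : Fin o → ℝ) : Prop :=
  xx ∈ Xs ∧ uu ∈ Us ∧ ww ∈ Ws ∧ pp ∈ Ps ∧ f xx uu ww pp ∈ Xs

section Quad

variable {ι : Type*} [Fintype ι]

lemma dotProduct_self_nonneg (v : ι → ℝ) : 0 ≤ v ⬝ᵥ v := by
  simpa using dotProduct_star_self_nonneg v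

lemma quad_nonneg {M : Matrix ι ι ℝ} (hM : M.PosSemidef) (v : ι → ℝ) : 0 ≤ quad M v := by
  simpa [quad] using hM.dotProduct_mulVec_nonneg v

@[simp]
lemma quad_add (A B : Matrix ι ι ℝ) (v : ι → ℝ) : quad (A + B) v = quad A v + quad B v := by
  simp [quad, add_mulVec, dotProduct_add]

@[simp]
lemma quad_smul (c : ℝ) (A : Matrix ι ι ℝ) (v : ι → ℝ) : quad (c • A) v = c * quad A v := by
  simp [quad, smul_mulVec, dotProduct_smul]

lemma quad_le_quad_of_posSemidef_sub {A B : Matrix ι ι ℝ} (hAB : (B - A).PosSemidef)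
    (v : ι → ℝ) : quad A v ≤ quad B v := by
  have := quad_nonneg hAB v
  simp only [quad, sub_mulVec, dotProduct_sub] at this ⊢
  linarith

lemma nonneg_of_isLeast_quad_le {S : Matrix ι ι ℝ} (hS : S.PosSemidef) {L : ℝ}
    (hL : IsLeast {l | ∀ v : ι → ℝ, quad S v ≤ l * (v ⬝ᵥ v)} L) : 0 ≤ L := by
  classical
  rcases isEmpty_or_nonempty ι with hι | ⟨⟨i⟩⟩
  · have := hL.2 (show L - 1 ∈ _ from fun v => by simp [quad, Subsingleton.elim v 0])
    linarith
  · have := hL.1 (Pi.single i 1)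
    simp only [dotProduct_single, Pi.single_eq_same, mul_one] at this
    linarith [quad_nonneg hS (Pi.single i 1)]

end Quad

lemma le_pow_mul_add_sum_of_le_mul_add {V b : ℕ → ℝ} {a : ℝ} (ha : 0 ≤ a) :
    ∀ {K : ℕ}, (∀ s < K, V (s + 1) ≤ a * V s + b s) →
      V K ≤ a ^ K * V 0 + ∑ j ∈ range K, a ^ (K - 1 - j) * b j
  | 0, _ => by simp
  | K + 1, hV => by
    have ih := le_pow_mul_add_sum_of_le_mul_add ha fun s hs => hV s (hs.trans K.lt_succ_self)
    have hpow : ∀ j ∈ range K, a ^ (K + 1 - 1 - j) * b j = a * (a ^ (K - 1 - j) * b j) := by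
      intro j hj
      rw [show K + 1 - 1 - j = K - 1 - j + 1 by grind, pow_succ]
      ring
    rw [sum_range_succ, sum_congr rfl hpow, ← mul_sum, show K + 1 - 1 - K = 0 by omega, pow_zero,
      pow_succ]
    nlinarith [hV K K.lt_succ_self]

lemma sum_pow_mul_const_add_le {a A : ℝ} (ha0 : 0 ≤ a) (ha1 : a < 1) (hA : 0 ≤ A)
    (e : ℕ → ℝ) (t : ℕ) :
    ∑ j ∈ range t, a ^ (t - 1 - j) * (A + e j)
      ≤ 1 / (1 - a) * A + ∑ j ∈ range t, a ^ (t - 1 - j) * e j := by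
  have hgeom : ∑ j ∈ range t, a ^ (t - 1 - j) ≤ 1 / (1 - a) := by
    rw [sum_range_reflect (a ^ ·) t, range_eq_Ico]
    simpa using geom_sum_Ico_le_of_lt_one (m := 0) (n := t) ha0 ha1
  simp only [mul_add, sum_add_distrib, ← sum_mul]
  gcongr

lemma pow_mul_add_mul_pow_mul_le {a b η c x y : ℝ} (k : ℕ) (ha : 0 ≤ a) (haη : a ≤ η)
    (hb : 0 ≤ b) (hbη : b ≤ η) (hc : 0 ≤ c) (hx : 0 ≤ x) (hy : 0 ≤ y) :
    a ^ k * x + c * (b ^ k * y) ≤ η ^ k * (x + c * y) := by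
  have hak : a ^ k ≤ η ^ k := pow_le_pow_left₀ ha haη k
  have hbk : b ^ k ≤ η ^ k := pow_le_pow_left₀ hb hbη k
  nlinarith [mul_le_mul_of_nonneg_right hak hx, mul_le_mul_of_nonneg_right hbk hy]

lemma min_mul_add_le {a b X Y A B : ℝ} (hX : 0 ≤ X) (hY : 0 ≤ Y) (hA : a * X ≤ A)
    (hB : b * Y ≤ B) : min a b * (X + Y) ≤ A + B := by
  nlinarith [mul_le_mul_of_nonneg_right (min_le_left a b) hX,
    mul_le_mul_of_nonneg_right (min_le_right a b) hY]

lemma mul_add_mul_le_max_mul_add {a b X Y : ℝ} (hX : 0 ≤ X) (hY : 0 ≤ Y) :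
    a * X + b * Y ≤ max a b * (X + Y) := by
  nlinarith [mul_le_mul_of_nonneg_right (le_max_left a b) hX,
    mul_le_mul_of_nonneg_right (le_max_right a b) hY]

lemma one_le_zpow_one_sub_mul_pow {η : ℝ} (h0 : 0 < η) (h1 : η ≤ 1) {t T : ℕ} (ht : t < T) :
    1 ≤ η ^ ((1 : ℤ) - T) * η ^ t := by
  rw [← zpow_natCast η t, ← zpow_add₀ h0.ne']
  exact one_le_zpow_of_nonpos₀ h0 h1 (by omega)

lemma sum_pow_mul_quad_add_mul_sum_pow_mul_quad_le {κ ι : Type*} [Fintype κ] [Fintype ι]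
    {Qx Qp : Matrix κ κ ℝ} {Rx Rp : Matrix ι ι ℝ} (hQx : Qx.PosSemidef) (hRx : Rx.PosSemidef)
    (hQp : Qp.PosSemidef) (hRp : Rp.PosSemidef) {a b η c : ℝ} (ha : 0 ≤ a) (haη : a ≤ η)
    (hb : 0 ≤ b) (hbη : b ≤ η) (hc : 0 ≤ c) (w wt : ℕ → κ → ℝ) (y yt : ℕ → ι → ℝ) (t : ℕ) :
    ∑ j ∈ range t, a ^ (t - 1 - j) * (quad Qx (w j - wt j) + quad Rx (y j - yt j))
        + c * ∑ j ∈ range t, b ^ (t - 1 - j) * (quad Qp (w j - wt j) + quad Rp (y j - yt j))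
      ≤ ∑ j ∈ range t, η ^ j * (quad (Qx + c • Qp) (w (t - 1 - j) - wt (t - 1 - j))
          + quad (Rx + c • Rp) (y (t - 1 - j) - yt (t - 1 - j))) := by
  conv_rhs => rw [← sum_range_reflect]
  rw [mul_sum, ← sum_add_distrib]
  refine sum_le_sum fun j hj => ?_
  rw [show t - 1 - (t - 1 - j) = j by grind]
  calc _ ≤ η ^ (t - 1 - j) * (quad Qx (w j - wt j) + quad Rx (y j - yt j)
          + c * (quad Qp (w j - wt j) + quad Rp (y j - yt j))) :=
        pow_mul_add_mul_pow_mul_le _ ha haη hb hbη hc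
          (add_nonneg (quad_nonneg hQx _) (quad_nonneg hRx _))
          (add_nonneg (quad_nonneg hQp _) (quad_nonneg hRp _))
    _ = _ := by simp only [quad_add, quad_smul]; ring

lemma quad_le_of_excitation {ι : Type*} [Fintype ι] {Sx Sp : Matrix ι ι ℝ} {lam L η B : ℝ}
    {t T : ℕ} (hSx : Sx.PosSemidef)
    (hlam : IsLeast {l : ℝ | 0 ≤ l ∧ (l • Sp - Sx).PosSemidef} lam)
    (hL : IsLeast {l | ∀ v : ι → ℝ, quad Sx v ≤ l * (v ⬝ᵥ v)} L) (hη0 : 0 < η) (hη1 : η ≤ 1)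
    (hB : 0 ≤ B) (v : ι → ℝ) (hPE : T ≤ t → quad Sp v ≤ B) :
    quad Sx v ≤ L * η ^ ((1 : ℤ) - T) * η ^ t * (v ⬝ᵥ v) + lam * B := by
  have hv := dotProduct_self_nonneg v
  have hL0 := nonneg_of_isLeast_quad_le hSx hL
  have hlamB := mul_nonneg hlam.1.1 hB
  rcases lt_or_ge t T with hT | hT
  · have := one_le_zpow_one_sub_mul_pow hη0 hη1 hT
    nlinarith [hL.1 v, mul_nonneg hL0 hv]
  · have hSxSp : quad Sx v ≤ lam * quad Sp v := by
      simpa using quad_le_quad_of_posSemidef_sub hlam.1.2 v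
    have hηT : 0 ≤ η ^ ((1 : ℤ) - T) * η ^ t := by positivity
    nlinarith [mul_nonneg (mul_nonneg hL0 hηT) hv, mul_le_mul_of_nonneg_left (hPE hT) hlam.1.1]

lemma pow_mul_add_mul_pow_mul_quad_le {ι : Type*} [Fintype ι] {A P : Matrix ι ι ℝ}
    (hP : P.PosSemidef) {a b η c V L : ℝ} (k : ℕ) (ha : 0 ≤ a) (haη : a ≤ η) (hb : 0 ≤ b)
    (hbη : b ≤ η) (hc : 0 ≤ c) (hV0 : 0 ≤ V) {v : ι → ℝ} (hV : V ≤ quad A v)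
    (hL : quad (A + c • P) v ≤ L * (v ⬝ᵥ v)) :
    a ^ k * V + c * (b ^ k * quad P v) ≤ L * (η ^ k * (v ⬝ᵥ v)) := by
  have hηk : 0 ≤ η ^ k := pow_nonneg (ha.trans haη) k
  calc _ ≤ η ^ k * (V + c * quad P v) :=
        pow_mul_add_mul_pow_mul_le k ha haη hb hbη hc hV0 (quad_nonneg hP v)
    _ ≤ η ^ k * quad (A + c • P) v := by
        rw [quad_add, quad_smul]
        gcongr
    _ ≤ L * (η ^ k * (v ⬝ᵥ v)) := by
        linarith [mul_le_mul_of_nonneg_left hL hηk]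

section Trajectory

variable {n m q o r : ℕ}

def IsTrajectory
    (f : (Fin n → ℝ) → (Fin m → ℝ) → (Fin q → ℝ) → (Fin o → ℝ) → (Fin n → ℝ))
    (h : (Fin n → ℝ) → (Fin m → ℝ) → (Fin q → ℝ) → (Fin o → ℝ) → (Fin r → ℝ))
    (Xs : Set (Fin n → ℝ)) (Us : Set (Fin m → ℝ)) (Ws : Set (Fin q → ℝ)) (Ps : Set (Fin o → ℝ))
    (K : ℕ) (x : ℕ → Fin n → ℝ) (u : ℕ → Fin m → ℝ) (w : ℕ → Fin q → ℝ) (p : Fin o → ℝ)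
    (y : ℕ → Fin r → ℝ) : Prop :=
  ∀ s < K, ZmemS f Xs Us Ws Ps (x s) (u s) (w s) p ∧ x (s + 1) = f (x s) (u s) (w s) p ∧
    y s = h (x s) (u s) (w s) p

variable {f : (Fin n → ℝ) → (Fin m → ℝ) → (Fin q → ℝ) → (Fin o → ℝ) → (Fin n → ℝ)}
  {h : (Fin n → ℝ) → (Fin m → ℝ) → (Fin q → ℝ) → (Fin o → ℝ) → (Fin r → ℝ)}
  {Xs : Set (Fin n → ℝ)} {Us : Set (Fin m → ℝ)} {Ws : Set (Fin q → ℝ)} {Ps : Set (Fin o → ℝ)}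
  {K : ℕ} {x xt : ℕ → Fin n → ℝ} {u : ℕ → Fin m → ℝ} {w wt : ℕ → Fin q → ℝ}
  {p pt : Fin o → ℝ} {y yt : ℕ → Fin r → ℝ}

lemma IsTrajectory.mem_last (hτ : IsTrajectory f h Xs Us Ws Ps K x u w p y) (hx0 : x 0 ∈ Xs) :
    x K ∈ Xs := by
  cases K with
  | zero => exact hx0
  | succ s =>
    obtain ⟨hZ, hx, -⟩ := hτ s s.lt_succ_self
    exact hx ▸ hZ.2.2.2.2

lemma IsTrajectory.lyapunov_le {U : (Fin n → ℝ) → (Fin n → ℝ) → ℝ}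
    {Sx : Matrix (Fin o) (Fin o) ℝ} {Qx : Matrix (Fin q) (Fin q) ℝ}
    {Rx : Matrix (Fin r) (Fin r) ℝ} {ηx : ℝ} (hηx : 0 ≤ ηx)
    (hUdiss : ∀ xx uu ww pp xxt wwt ppt,
      ZmemS f Xs Us Ws Ps xx uu ww pp → ZmemS f Xs Us Ws Ps xxt uu wwt ppt →
      U (f xx uu ww pp) (f xxt uu wwt ppt)
        ≤ ηx * U xx xxt + quad Sx (pp - ppt) + quad Qx (ww - wwt)
          + quad Rx (h xx uu ww pp - h xxt uu wwt ppt))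
    (hτ : IsTrajectory f h Xs Us Ws Ps K x u w p y)
    (hτt : IsTrajectory f h Xs Us Ws Ps K xt u wt pt yt) :
    U (x K) (xt K) ≤ ηx ^ K * U (x 0) (xt 0) + ∑ j ∈ range K, ηx ^ (K - 1 - j) *
      (quad Sx (p - pt) + (quad Qx (w j - wt j) + quad Rx (y j - yt j))) := by
  refine le_pow_mul_add_sum_of_le_mul_add (V := fun s => U (x s) (xt s)) hηx fun s hs => ?_
  obtain ⟨hZ, hx, hy⟩ := hτ s hs
  obtain ⟨hZt, hxt, hyt⟩ := hτt s hs
  have := hUdiss _ _ _ _ _ _ _ hZ hZt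
  rw [← hx, ← hxt, ← hy, ← hyt] at this
  linarith

end Trajectory

theorem detectability_and_uniform_PE_implies_joint_iIOSS_bound_general
    {n m q o r : ℕ}
    (f : (Fin n → ℝ) → (Fin m → ℝ) → (Fin q → ℝ) → (Fin o → ℝ) → (Fin n → ℝ))
    (h : (Fin n → ℝ) → (Fin m → ℝ) → (Fin q → ℝ) → (Fin o → ℝ) → (Fin r → ℝ))
    (Xs : Set (Fin n → ℝ)) (Us : Set (Fin m → ℝ)) (Ws : Set (Fin q → ℝ))
    (Ps : Set (Fin o → ℝ))
    -- Assumption 1 data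
    (Ulo Uhi : Matrix (Fin n) (Fin n) ℝ) (Sx : Matrix (Fin o) (Fin o) ℝ)
    (Qx : Matrix (Fin q) (Fin q) ℝ) (Rx : Matrix (Fin r) (Fin r) ℝ)
    (hSxM : Sx.PosDef)
    (hQx : Qx.PosDef) (hRx : Rx.PosDef)
    (ηx : ℝ) (hηx0 : 0 ≤ ηx) (hηx1 : ηx < 1)
    (U : (Fin n → ℝ) → (Fin n → ℝ) → ℝ)
    (hUnn : ∀ a b, a ∈ Xs → b ∈ Xs → 0 ≤ U a b)
    (hUbnd : ∀ a b, a ∈ Xs → b ∈ Xs →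
      quad Ulo (a - b) ≤ U a b ∧ U a b ≤ quad Uhi (a - b))
    (hUdiss : ∀ xx uu ww pp xxt wwt ppt,
      ZmemS f Xs Us Ws Ps xx uu ww pp → ZmemS f Xs Us Ws Ps xxt uu wwt ppt →
      U (f xx uu ww pp) (f xxt uu wwt ppt)
        ≤ ηx * U xx xxt + quad Sx (pp - ppt) + quad Qx (ww - wwt)
          + quad Rx (h xx uu ww pp - h xxt uu wwt ppt))
    -- Definition 1 data
    (Sp : Matrix (Fin o) (Fin o) ℝ) (Pp : Matrix (Fin n) (Fin n) ℝ)
    (Qp : Matrix (Fin q) (Fin q) ℝ) (Rp : Matrix (Fin r) (Fin r) ℝ)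
    (hPp : Pp.PosDef) (hQp : Qp.PosDef) (hRp : Rp.PosDef)
    (ηp : ℝ) (hηp0 : 0 ≤ ηp) (hηp1 : ηp < 1)
    -- Assumption 3: uniform persistent excitation with index T
    (T : ℕ)
    (hPE : ∀ K : ℕ, T ≤ K →
      ∀ (x xt : ℕ → Fin n → ℝ) (u : ℕ → Fin m → ℝ) (w wt : ℕ → Fin q → ℝ)
        (p pt : Fin o → ℝ) (y yt : ℕ → Fin r → ℝ),
      (∀ s < K, ZmemS f Xs Us Ws Ps (x s) (u s) (w s) p) →
      (∀ s < K, ZmemS f Xs Us Ws Ps (xt s) (u s) (wt s) pt) →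
      (∀ s < K, x (s + 1) = f (x s) (u s) (w s) p) →
      (∀ s < K, xt (s + 1) = f (xt s) (u s) (wt s) pt) →
      (∀ s < K, y s = h (x s) (u s) (w s) p) →
      (∀ s < K, yt s = h (xt s) (u s) (wt s) pt) →
      quad Sp (p - pt)
        ≤ ηp ^ K * quad Pp (x 0 - xt 0)
          + ∑ j ∈ Finset.range K, ηp ^ (K - 1 - j) *
              (quad Qp (w j - wt j) + quad Rp (y j - yt j)))
    -- eigenvalue constants
    (lamSxSp : ℝ)
    (hlamSxSp : IsLeast {l : ℝ | 0 ≤ l ∧ ((l • Sp - Sx :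
        Matrix (Fin o) (Fin o) ℝ)).PosSemidef} lamSxSp)
    (lminUlo : ℝ)
    (hlminUlo : IsGreatest {l : ℝ | ∀ v : Fin n → ℝ, l * (v ⬝ᵥ v) ≤ quad Ulo v} lminUlo)
    (lminSx : ℝ)
    (hlminSx : IsGreatest {l : ℝ | ∀ v : Fin o → ℝ, l * (v ⬝ᵥ v) ≤ quad Sx v} lminSx)
    (lmaxPt1 : ℝ)
    (hlmaxPt1 : IsLeast {l : ℝ | ∀ v : Fin n → ℝ,
      quad (Uhi + ((1 / (1 - ηx) + 1) * lamSxSp) • Pp) v ≤ l * (v ⬝ᵥ v)} lmaxPt1)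
    (lmaxSx : ℝ)
    (hlmaxSx : IsLeast {l : ℝ | ∀ v : Fin o → ℝ, quad Sx v ≤ l * (v ⬝ᵥ v)} lmaxSx)
    -- η̃ > 0
    (hηtpos : 0 < max ηx ηp) :
    ∀ K : ℕ,
    ∀ (x xt : ℕ → Fin n → ℝ) (u : ℕ → Fin m → ℝ) (w wt : ℕ → Fin q → ℝ)
      (p pt : Fin o → ℝ) (y yt : ℕ → Fin r → ℝ),
    x 0 ∈ Xs → xt 0 ∈ Xs →
    (∀ s < K, ZmemS f Xs Us Ws Ps (x s) (u s) (w s) p) →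
    (∀ s < K, ZmemS f Xs Us Ws Ps (xt s) (u s) (wt s) pt) →
    (∀ s < K, x (s + 1) = f (x s) (u s) (w s) p) →
    (∀ s < K, xt (s + 1) = f (xt s) (u s) (wt s) pt) →
    (∀ s < K, y s = h (x s) (u s) (w s) p) →
    (∀ s < K, yt s = h (xt s) (u s) (wt s) pt) →
    ∀ t : ℕ, t ≤ K →
    min lminUlo lminSx *
        ((x t - xt t) ⬝ᵥ (x t - xt t) + (p - pt) ⬝ᵥ (p - pt))
      ≤ max lmaxPt1 (lmaxSx * (max ηx ηp) ^ ((1 : ℤ) - T) * (1 / (1 - ηx) + 1)) *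
          (max ηx ηp) ^ t *
          ((x 0 - xt 0) ⬝ᵥ (x 0 - xt 0) + (p - pt) ⬝ᵥ (p - pt))
        + ∑ j ∈ Finset.range t, (max ηx ηp) ^ j *
            (quad (Qx + ((1 / (1 - ηx) + 1) * lamSxSp) • Qp)
                (w (t - 1 - j) - wt (t - 1 - j))
              + quad (Rx + ((1 / (1 - ηx) + 1) * lamSxSp) • Rp)
                (y (t - 1 - j) - yt (t - 1 - j))) := by
  intro K x xt u w wt p pt y yt hx0 hxt0 hZ hZt hdyn hdynt hy hyt t htK
  have hc : 0 ≤ 1 / (1 - ηx) + 1 := by have := sub_pos.2 hηx1; positivity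
  set η := max ηx ηp
  have hc₁ : 0 ≤ (1 / (1 - ηx) + 1) * lamSxSp := mul_nonneg hc hlamSxSp.1.1
  have hτ : IsTrajectory f h Xs Us Ws Ps t x u w p y := fun s hs =>
    ⟨hZ s (hs.trans_le htK), hdyn s (hs.trans_le htK), hy s (hs.trans_le htK)⟩
  have hτt : IsTrajectory f h Xs Us Ws Ps t xt u wt pt yt := fun s hs =>
    ⟨hZt s (hs.trans_le htK), hdynt s (hs.trans_le htK), hyt s (hs.trans_le htK)⟩
  have hlhs := min_mul_add_le (dotProduct_self_nonneg (x t - xt t))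
    (dotProduct_self_nonneg (p - pt))
    ((hlminUlo.1 _).trans (hUbnd _ _ (hτ.mem_last hx0) (hτt.mem_last hxt0)).1)
    (hlminSx.1 (p - pt))
  have hV := (hτ.lyapunov_le hηx0 hUdiss hτt).trans (add_le_add le_rfl
    (sum_pow_mul_const_add_le hηx0 hηx1 (quad_nonneg hSxM.posSemidef (p - pt)) _ t))
  have hp := quad_le_of_excitation hSxM.posSemidef hlamSxSp hlmaxSx hηtpos (max_lt hηx1 hηp1).le
    (add_nonneg (mul_nonneg (pow_nonneg hηp0 t) (quad_nonneg hPp.posSemidef (x 0 - xt 0)))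
      (sum_nonneg fun j _ => mul_nonneg (pow_nonneg hηp0 _)
        (add_nonneg (quad_nonneg hQp.posSemidef (w j - wt j))
          (quad_nonneg hRp.posSemidef (y j - yt j)))))
    (p - pt) fun hT => hPE t hT x xt u w wt p pt y yt (fun s hs => (hτ s hs).1)
      (fun s hs => (hτt s hs).1) (fun s hs => (hτ s hs).2.1) (fun s hs => (hτt s hs).2.1)
      (fun s hs => (hτ s hs).2.2) (fun s hs => (hτt s hs).2.2)
  have hsum := sum_pow_mul_quad_add_mul_sum_pow_mul_quad_le hQx.posSemidef hRx.posSemidef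
    hQp.posSemidef hRp.posSemidef hηx0 (le_max_left ηx ηp) hηp0 (le_max_right ηx ηp) hc₁ w wt y yt t
  have hinit := pow_mul_add_mul_pow_mul_quad_le hPp.posSemidef t hηx0 (le_max_left ηx ηp) hηp0
    (le_max_right ηx ηp) hc₁ (hUnn _ _ hx0 hxt0) (hUbnd _ _ hx0 hxt0).2 (hlmaxPt1.1 (x 0 - xt 0))
  have hc₃ := mul_add_mul_le_max_mul_add (a := lmaxPt1)
    (b := lmaxSx * η ^ ((1 : ℤ) - T) * (1 / (1 - ηx) + 1))
    (mul_nonneg (pow_nonneg hηtpos.le t) (dotProduct_self_nonneg (x 0 - xt 0)))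
    (mul_nonneg (pow_nonneg hηtpos.le t) (dotProduct_self_nonneg (p - pt)))
  linarith [mul_le_mul_of_nonneg_left hp hc]

/-- **Proposition 1, forward direction (explicit bound).**
Under Assumption 1 (i-IOSS Lyapunov function `U`) and Assumption 3 (uniform persistent
excitation with index `T`), with `η̃ := max{η_x,η_p} > 0`,
`c₁' := (1/(1−η_x)+1)λ_max(S_x,S_p)`, `P̃₁ := U_hi + c₁'P_p`, `Q̃ := Q_x + c₁'Q_p`,
`R̃ := R_x + c₁'R_p`, `c₂ := min{λ_min(U_lo),λ_min(S_x)}`,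
`c₃ := max{λ_max(P̃₁), λ_max(S_x)η̃^{1−T}(1/(1−η_x)+1)}`, every pair of length-`K`
trajectories with common inputs satisfies, for all `t ≤ K`,
`c₂(‖x_t−x̃_t‖² + ‖p−p̃‖²) ≤ c₃η̃^t(‖x_0−x̃_0‖² + ‖p−p̃‖²)
 + Σ_{j=1}^{t} η̃^{j−1}(‖w_{t−j}−w̃_{t−j}‖²_{Q̃} + ‖y_{t−j}−ỹ_{t−j}‖²_{R̃})`;
i.e. the augmented system with state `(x,p)` is exponentially i-IOSS. -/
theorem detectability_and_uniform_PE_implies_joint_iIOSS_bound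
    {n m q o r : ℕ}
    (f : (Fin n → ℝ) → (Fin m → ℝ) → (Fin q → ℝ) → (Fin o → ℝ) → (Fin n → ℝ))
    (h : (Fin n → ℝ) → (Fin m → ℝ) → (Fin q → ℝ) → (Fin o → ℝ) → (Fin r → ℝ))
    (Xs : Set (Fin n → ℝ)) (Us : Set (Fin m → ℝ)) (Ws : Set (Fin q → ℝ))
    (Ps : Set (Fin o → ℝ))
    -- Assumption 1 data
    (Ulo Uhi : Matrix (Fin n) (Fin n) ℝ) (Sx : Matrix (Fin o) (Fin o) ℝ)
    (Qx : Matrix (Fin q) (Fin q) ℝ) (Rx : Matrix (Fin r) (Fin r) ℝ)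
    (hUlo : Ulo.PosDef) (hUhi : Uhi.PosDef) (hSxM : Sx.PosDef)
    (hQx : Qx.PosDef) (hRx : Rx.PosDef)
    (ηx : ℝ) (hηx0 : 0 ≤ ηx) (hηx1 : ηx < 1)
    (U : (Fin n → ℝ) → (Fin n → ℝ) → ℝ)
    (hUnn : ∀ a b, a ∈ Xs → b ∈ Xs → 0 ≤ U a b)
    (hUbnd : ∀ a b, a ∈ Xs → b ∈ Xs →
      quad Ulo (a - b) ≤ U a b ∧ U a b ≤ quad Uhi (a - b))
    (hUdiss : ∀ xx uu ww pp xxt wwt ppt,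
      ZmemS f Xs Us Ws Ps xx uu ww pp → ZmemS f Xs Us Ws Ps xxt uu wwt ppt →
      U (f xx uu ww pp) (f xxt uu wwt ppt)
        ≤ ηx * U xx xxt + quad Sx (pp - ppt) + quad Qx (ww - wwt)
          + quad Rx (h xx uu ww pp - h xxt uu wwt ppt))
    -- Definition 1 data
    (Sp : Matrix (Fin o) (Fin o) ℝ) (Pp : Matrix (Fin n) (Fin n) ℝ)
    (Qp : Matrix (Fin q) (Fin q) ℝ) (Rp : Matrix (Fin r) (Fin r) ℝ)
    (hSp : Sp.PosDef) (hPp : Pp.PosDef) (hQp : Qp.PosDef) (hRp : Rp.PosDef)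
    (ηp : ℝ) (hηp0 : 0 ≤ ηp) (hηp1 : ηp < 1)
    -- Assumption 3: uniform persistent excitation with index T
    (T : ℕ)
    (hPE : ∀ K : ℕ, T ≤ K →
      ∀ (x xt : ℕ → Fin n → ℝ) (u : ℕ → Fin m → ℝ) (w wt : ℕ → Fin q → ℝ)
        (p pt : Fin o → ℝ) (y yt : ℕ → Fin r → ℝ),
      (∀ s < K, ZmemS f Xs Us Ws Ps (x s) (u s) (w s) p) →
      (∀ s < K, ZmemS f Xs Us Ws Ps (xt s) (u s) (wt s) pt) →
      (∀ s < K, x (s + 1) = f (x s) (u s) (w s) p) →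
      (∀ s < K, xt (s + 1) = f (xt s) (u s) (wt s) pt) →
      (∀ s < K, y s = h (x s) (u s) (w s) p) →
      (∀ s < K, yt s = h (xt s) (u s) (wt s) pt) →
      quad Sp (p - pt)
        ≤ ηp ^ K * quad Pp (x 0 - xt 0)
          + ∑ j ∈ Finset.range K, ηp ^ (K - 1 - j) *
              (quad Qp (w j - wt j) + quad Rp (y j - yt j)))
    -- eigenvalue constants
    (lamSxSp : ℝ)
    (hlamSxSp : IsLeast {l : ℝ | 0 ≤ l ∧ ((l • Sp - Sx :
        Matrix (Fin o) (Fin o) ℝ)).PosSemidef} lamSxSp)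
    (lminUlo : ℝ)
    (hlminUlo : IsGreatest {l : ℝ | ∀ v : Fin n → ℝ, l * (v ⬝ᵥ v) ≤ quad Ulo v} lminUlo)
    (lminSx : ℝ)
    (hlminSx : IsGreatest {l : ℝ | ∀ v : Fin o → ℝ, l * (v ⬝ᵥ v) ≤ quad Sx v} lminSx)
    (lmaxPt1 : ℝ)
    (hlmaxPt1 : IsLeast {l : ℝ | ∀ v : Fin n → ℝ,
      quad (Uhi + ((1 / (1 - ηx) + 1) * lamSxSp) • Pp) v ≤ l * (v ⬝ᵥ v)} lmaxPt1)
    (lmaxSx : ℝ)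
    (hlmaxSx : IsLeast {l : ℝ | ∀ v : Fin o → ℝ, quad Sx v ≤ l * (v ⬝ᵥ v)} lmaxSx)
    -- η̃ > 0
    (hηtpos : 0 < max ηx ηp) :
    ∀ K : ℕ,
    ∀ (x xt : ℕ → Fin n → ℝ) (u : ℕ → Fin m → ℝ) (w wt : ℕ → Fin q → ℝ)
      (p pt : Fin o → ℝ) (y yt : ℕ → Fin r → ℝ),
    x 0 ∈ Xs → xt 0 ∈ Xs →
    (∀ s < K, ZmemS f Xs Us Ws Ps (x s) (u s) (w s) p) →
    (∀ s < K, ZmemS f Xs Us Ws Ps (xt s) (u s) (wt s) pt) →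
    (∀ s < K, x (s + 1) = f (x s) (u s) (w s) p) →
    (∀ s < K, xt (s + 1) = f (xt s) (u s) (wt s) pt) →
    (∀ s < K, y s = h (x s) (u s) (w s) p) →
    (∀ s < K, yt s = h (xt s) (u s) (wt s) pt) →
    ∀ t : ℕ, t ≤ K →
    min lminUlo lminSx *
        ((x t - xt t) ⬝ᵥ (x t - xt t) + (p - pt) ⬝ᵥ (p - pt))
      ≤ max lmaxPt1 (lmaxSx * (max ηx ηp) ^ ((1 : ℤ) - T) * (1 / (1 - ηx) + 1)) *
          (max ηx ηp) ^ t *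
          ((x 0 - xt 0) ⬝ᵥ (x 0 - xt 0) + (p - pt) ⬝ᵥ (p - pt))
        + ∑ j ∈ Finset.range t, (max ηx ηp) ^ j *
            (quad (Qx + ((1 / (1 - ηx) + 1) * lamSxSp) • Qp)
                (w (t - 1 - j) - wt (t - 1 - j))
              + quad (Rx + ((1 / (1 - ηx) + 1) * lamSxSp) • Rp)
                (y (t - 1 - j) - yt (t - 1 - j))) :=
  detectability_and_uniform_PE_implies_joint_iIOSS_bound_general f h Xs Us Ws Ps Ulo Uhi Sx Qx Rx
    hSxM hQx hRx ηx hηx0 hηx1 U hUnn hUbnd hUdiss Sp Pp Qp Rp hPp hQp hRp ηp hηp0 hηp1 T hPE lamSxSp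
    hlamSxSp lminUlo hlminUlo lminSx hlminSx lmaxPt1 hlmaxPt1 lmaxSx hlmaxSx hηtpos
end

section
/- (Proposition 2) Let f and h be twice continuously differentiable and, for z = (x,u,w,p), z̃ = (x̃,u,w̃,p̃) ∈ ℤ, define the mean-value linearizations A(z,z̃) := ∫₀¹ ∂f/∂x(z+s(z̃−z))ds, B(z,z̃) := ∫₀¹ ∂f/∂w(·)ds, E(z,z̃) := ∫₀¹ ∂f/∂p(·)ds, C(z,z̃) := ∫₀¹ ∂h/∂x(·)ds, D(z,z̃) := ∫₀¹ ∂h/∂w(·)ds, F(z,z̃) := ∫₀¹ ∂h/∂p(·)ds. Suppose Assumption 4 holds (‖B(z,z̃)‖ ≤ B̄, ‖C(z,z̃)‖ ≤ C̄, ‖D(z,z̃)‖ ≤ D̄ for all z,z̃ ∈ ℤ) and Assumption 5 holds (there exist L : ℤ×ℤ → ℝ^{n×r} with ‖L(z,z̃)‖ ≤ L̄, a symmetric positive definite P, and η ∈ (0,1) such that Φ(z,z̃) := A(z,z̃)+L(z,z̃)C(z,z̃) satisfies Φ(z,z̃)ᵀPΦ(z,z̃) ⪯ ηP for all z,z̃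 ∈ ℤ). Fix T ≥ 1, ε > 0 and γ > 0 such that μ := (1+ε)η + 3γC̄²/λ_min(P) < 1, and let a pair of length-T system trajectories in ℤ (with entries z_t, z̃_t, common inputs, outputs y_t, ỹ_t) satisfy 𝒞_T := Σ_{t=0}^{T−1} μ^{T−1−t} Ȳ_tᵀ Ȳ_t ⪰ α I_o for some α > 0, where Ȳ_t := C(z_t,z̃_t)Y_t + F(z_t,z̃_t) and Y_0 := 0, Y_{t+1} := Φ(z_t,z̃_t)Y_t + E(z_t,z̃_t) + L(z_t,z̃_t)F(z_t,z̃_t). Then there exist symmetric positive definite matrices Q_p, S_p, R_p and η_p ∈ [0,1) (one may take η_p = μ and S_p = αγ I_o) such that the trajectory pair belongs to 𝔼_T with P_p = P, i.e., ‖p−p̃‖²_{S_p} ≤ η_p^T‖x_0−x̃_0‖²_P + Σ_{j=0}^{T−1} η_p^{T−j−1}(‖w_j−w̃_j‖²_{Q_p} + ‖y_j−ỹ_j‖²_{R_p}). -/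
open Matrix Finset

/-- Euclidean norm of a vector. -/
noncomputable def eucNorm {ι : Type*} [Fintype ι] (v : ι → ℝ) : ℝ :=
  Real.sqrt (v ⬝ᵥ v)

/-- Combined point `z = (x,u,w,p)`. -/
abbrev Pt (n m q o : ℕ) :=
  (Fin n → ℝ) × (Fin m → ℝ) × (Fin q → ℝ) × (Fin o → ℝ)

/-- Membership of `z = (x,u,w,p)` in `ℤ = {(x,u,w,p) ∈ 𝕏×𝕌×𝕎×ℙ : f(x,u,w,p) ∈ 𝕏}`. -/
def ZmemT {n m q o : ℕ}
    (f : (Fin n → ℝ) → (Fin m → ℝ) → (Fin q → ℝ) → (Fin o → ℝ) → (Fin n → ℝ))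
    (Xs : Set (Fin n → ℝ)) (Us : Set (Fin m → ℝ)) (Ws : Set (Fin q → ℝ))
    (Ps : Set (Fin o → ℝ)) (z : Pt n m q o) : Prop :=
  z.1 ∈ Xs ∧ z.2.1 ∈ Us ∧ z.2.2.1 ∈ Ws ∧ z.2.2.2 ∈ Ps
    ∧ f z.1 z.2.1 z.2.2.1 z.2.2.2 ∈ Xs

/-- Mean-value linearization `A(z,z̃) = ∫₀¹ ∂f/∂x (z+s(z̃−z)) ds`. -/
noncomputable def Amat {n m q o : ℕ}
    (f : (Fin n → ℝ) → (Fin m → ℝ) → (Fin q → ℝ) → (Fin o → ℝ) → (Fin n → ℝ))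
    (z zt : Pt n m q o) : Matrix (Fin n) (Fin n) ℝ :=
  fun i jj => ∫ s in (0:ℝ)..1,
    fderiv ℝ (fun xv => f xv (z + s • (zt - z)).2.1 (z + s • (zt - z)).2.2.1
      (z + s • (zt - z)).2.2.2 i) ((z + s • (zt - z)).1) (Pi.single jj 1)

/-- Mean-value linearization `B(z,z̃) = ∫₀¹ ∂f/∂w (z+s(z̃−z)) ds`. -/
noncomputable def Bmat {n m q o : ℕ}
    (f : (Fin n → ℝ) → (Fin m → ℝ) → (Fin q → ℝ) → (Fin o → ℝ) → (Fin n → ℝ))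
    (z zt : Pt n m q o) : Matrix (Fin n) (Fin q) ℝ :=
  fun i jj => ∫ s in (0:ℝ)..1,
    fderiv ℝ (fun wv => f (z + s • (zt - z)).1 (z + s • (zt - z)).2.1 wv
      (z + s • (zt - z)).2.2.2 i) ((z + s • (zt - z)).2.2.1) (Pi.single jj 1)

/-- Mean-value linearization `E(z,z̃) = ∫₀¹ ∂f/∂p (z+s(z̃−z)) ds`. -/
noncomputable def Emat {n m q o : ℕ}
    (f : (Fin n → ℝ) → (Fin m → ℝ) → (Fin q → ℝ) → (Fin o → ℝ) → (Fin n → ℝ))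
    (z zt : Pt n m q o) : Matrix (Fin n) (Fin o) ℝ :=
  fun i jj => ∫ s in (0:ℝ)..1,
    fderiv ℝ (fun pv => f (z + s • (zt - z)).1 (z + s • (zt - z)).2.1
      (z + s • (zt - z)).2.2.1 pv i) ((z + s • (zt - z)).2.2.2) (Pi.single jj 1)

/-- Mean-value linearization `C(z,z̃) = ∫₀¹ ∂h/∂x (z+s(z̃−z)) ds`. -/
noncomputable def Cmat {n m q o r : ℕ}
    (h : (Fin n → ℝ) → (Fin m → ℝ) → (Fin q → ℝ) → (Fin o → ℝ) → (Fin r → ℝ))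
    (z zt : Pt n m q o) : Matrix (Fin r) (Fin n) ℝ :=
  fun i jj => ∫ s in (0:ℝ)..1,
    fderiv ℝ (fun xv => h xv (z + s • (zt - z)).2.1 (z + s • (zt - z)).2.2.1
      (z + s • (zt - z)).2.2.2 i) ((z + s • (zt - z)).1) (Pi.single jj 1)

/-- Mean-value linearization `D(z,z̃) = ∫₀¹ ∂h/∂w (z+s(z̃−z)) ds`. -/
noncomputable def Dmat {n m q o r : ℕ}
    (h : (Fin n → ℝ) → (Fin m → ℝ) → (Fin q → ℝ) → (Fin o → ℝ) → (Fin r → ℝ))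
    (z zt : Pt n m q o) : Matrix (Fin r) (Fin q) ℝ :=
  fun i jj => ∫ s in (0:ℝ)..1,
    fderiv ℝ (fun wv => h (z + s • (zt - z)).1 (z + s • (zt - z)).2.1 wv
      (z + s • (zt - z)).2.2.2 i) ((z + s • (zt - z)).2.2.1) (Pi.single jj 1)

/-- Mean-value linearization `F(z,z̃) = ∫₀¹ ∂h/∂p (z+s(z̃−z)) ds`. -/
noncomputable def Fmat {n m q o r : ℕ}
    (h : (Fin n → ℝ) → (Fin m → ℝ) → (Fin q → ℝ) → (Fin o → ℝ) → (Fin r → ℝ))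
    (z zt : Pt n m q o) : Matrix (Fin r) (Fin o) ℝ :=
  fun i jj => ∫ s in (0:ℝ)..1,
    fderiv ℝ (fun pv => h (z + s • (zt - z)).1 (z + s • (zt - z)).2.1
      (z + s • (zt - z)).2.2.1 pv i) ((z + s • (zt - z)).2.2.2) (Pi.single jj 1)

/-! With `ξ_t := (x_t - x̃_t) - Y_t (p - p̃)`, the mean-value form of `f` and `h` gives
`ξ_{t+1} = Φ_t ξ_t + (B_t + L_t D_t)(w_t - w̃_t) - L_t (y_t - ỹ_t)` and
`Ȳ_t (p - p̃) = (y_t - ỹ_t) - D_t (w_t - w̃_t) - C_t ξ_t`. Hence `V_t := ‖ξ_t‖²_P` satisfies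
`V_{t+1} ≤ (1+ε)η V_t + (noise)`, while `γ‖Ȳ_t (p - p̃)‖² ≤ (noise) + (3γC̄²/λ_min(P)) V_t`.
Weighting the second inequality by `μ^{T-1-t}` and summing, the `V_t` terms telescope against the
first one exactly because `μ = (1+ε)η + 3γC̄²/λ_min(P)`, leaving `μ^T V_0 = μ^T ‖x_0 - x̃_0‖²_P`;
the Gramian bound `𝒞_T ⪰ αI` bounds the left-hand side below by `αγ‖p - p̃‖²`. -/

section DotProduct

variable {ι : Type*} [Fintype ι]

lemma dotProduct_self_add_le (a b : ι → ℝ) :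
    (a + b) ⬝ᵥ (a + b) ≤ 2 * (a ⬝ᵥ a) + 2 * (b ⬝ᵥ b) := by
  have parallelogram : (a + b) ⬝ᵥ (a + b) + (a - b) ⬝ᵥ (a - b) = 2 * (a ⬝ᵥ a) + 2 * (b ⬝ᵥ b) := by
    simp only [add_dotProduct, dotProduct_add, sub_dotProduct, dotProduct_sub, dotProduct_comm b a]
    ring
  linarith [dotProduct_self_nonneg (a - b)]

lemma dotProduct_self_sub_le (a b : ι → ℝ) :
    (a - b) ⬝ᵥ (a - b) ≤ 2 * (a ⬝ᵥ a) + 2 * (b ⬝ᵥ b) := by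
  simpa [sub_eq_add_neg] using dotProduct_self_add_le a (-b)

lemma dotProduct_self_sub_sub_le (a b c : ι → ℝ) :
    (a - b - c) ⬝ᵥ (a - b - c) ≤ 3 * (a ⬝ᵥ a) + 3 * (b ⬝ᵥ b) + 3 * (c ⬝ᵥ c) := by
  have h : (a - b - c) ⬝ᵥ (a - b - c) + (a + b) ⬝ᵥ (a + b) + (a + c) ⬝ᵥ (a + c)
      + (b - c) ⬝ᵥ (b - c) = 3 * (a ⬝ᵥ a) + 3 * (b ⬝ᵥ b) + 3 * (c ⬝ᵥ c) := by
    simp only [add_dotProduct, dotProduct_add, sub_dotProduct, dotProduct_sub,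
      dotProduct_comm b a, dotProduct_comm c a, dotProduct_comm c b]
    ring
  linarith [dotProduct_self_nonneg (a + b), dotProduct_self_nonneg (a + c),
    dotProduct_self_nonneg (b - c)]

lemma dotProduct_self_le_of_eucNorm_le {κ : Type*} [Fintype κ] {a : ι → ℝ} {b : κ → ℝ} {c : ℝ}
    (h : eucNorm a ≤ c * eucNorm b) : a ⬝ᵥ a ≤ c ^ 2 * (b ⬝ᵥ b) := by
  have hsq := pow_le_pow_left₀ (Real.sqrt_nonneg _) h 2
  simp only [eucNorm] at hsq
  rwa [mul_pow, Real.sq_sqrt (dotProduct_self_nonneg a),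
    Real.sq_sqrt (dotProduct_self_nonneg b)] at hsq

end DotProduct

section QuadraticForm

variable {ι : Type*} [Fintype ι]

lemma quad_smul_one [DecidableEq ι] (c : ℝ) (v : ι → ℝ) :
    quad (c • (1 : Matrix ι ι ℝ)) v = c * (v ⬝ᵥ v) := by
  rw [quad, smul_mulVec, one_mulVec, dotProduct_smul, smul_eq_mul]

lemma quad_le_sum_abs_mul (M : Matrix ι ι ℝ) (v : ι → ℝ) :
    quad M v ≤ (∑ i, ∑ j, |M i j|) * (v ⬝ᵥ v) := by
  have hentry (i j : ι) : v i * (M i j * v j) ≤ |M i j| * (v ⬝ᵥ v) := by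
    have hvi := single_le_sum (fun k _ => mul_self_nonneg (v k)) (mem_univ i)
    have hvj := single_le_sum (fun k _ => mul_self_nonneg (v k)) (mem_univ j)
    have hvv : |v i| * |v j| ≤ v ⬝ᵥ v := by
      simp only [dotProduct] at hvi hvj ⊢
      nlinarith [abs_mul_abs_self (v i), abs_mul_abs_self (v j), abs_nonneg (v i),
        abs_nonneg (v j)]
    calc v i * (M i j * v j) ≤ |v i * (M i j * v j)| := le_abs_self _
      _ = |M i j| * (|v i| * |v j|) := by rw [abs_mul, abs_mul]; ring
      _ ≤ |M i j| * (v ⬝ᵥ v) := mul_le_mul_of_nonneg_left hvv (abs_nonneg _)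
  have hexpand : quad M v = ∑ i, ∑ j, v i * (M i j * v j) := by
    simp [quad, dotProduct, mulVec, mul_sum]
  rw [hexpand, sum_mul]
  refine sum_le_sum fun i _ => ?_
  rw [sum_mul]
  exact sum_le_sum fun j _ => hentry i j

lemma quad_add_le {M : Matrix ι ι ℝ} (hM : M.PosSemidef) {s : ℝ} (hs : 0 < s) (a b : ι → ℝ) :
    quad M (a + b) ≤ (1 + s) * quad M a + (1 + s⁻¹) * quad M b := by
  have hsymm : b ⬝ᵥ M *ᵥ a = a ⬝ᵥ M *ᵥ b := by
    have hT : Mᵀ = M := (isHermitian_iff_isSymm.mp hM.isHermitian).eq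
    rw [dotProduct_mulVec, ← vecMul_transpose, hT, dotProduct_comm]
  have hexpand : quad M (s • a - b) + s * (quad M (a + b)) =
      s * ((1 + s) * quad M a + (1 + s⁻¹) * quad M b) := by
    simp only [quad, mulVec_sub, mulVec_add, mulVec_smul, dotProduct_sub, dotProduct_add,
      sub_dotProduct, add_dotProduct, smul_dotProduct, dotProduct_smul, smul_eq_mul, hsymm]
    field_simp
    ring
  have h0 := quad_nonneg hM (s • a - b)
  nlinarith

lemma quad_mulVec_le {P Φ : Matrix ι ι ℝ} {η : ℝ} (h : (η • P - Φᵀ * P * Φ).PosSemidef)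
    (v : ι → ℝ) : quad P (Φ *ᵥ v) ≤ η * quad P v := by
  have h0 := quad_nonneg h v
  rw [quad, sub_mulVec, dotProduct_sub, smul_mulVec, dotProduct_smul, smul_eq_mul,
    ← mulVec_mulVec, ← mulVec_mulVec, dotProduct_mulVec v Φᵀ, vecMul_transpose] at h0
  rw [quad, quad]
  linarith

open scoped MatrixOrder in
lemma Matrix.PosDef.exists_pos_mul_dotProduct_le_quad [DecidableEq ι] {P : Matrix ι ι ℝ}
    (hP : P.PosDef) : ∃ c > 0, ∀ v : ι → ℝ, c * (v ⬝ᵥ v) ≤ quad P v := by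
  cases isEmpty_or_nonempty ι
  · exact ⟨1, one_pos, fun v => by simp [quad, dotProduct]⟩
  obtain ⟨c, hc, hcP⟩ := (CFC.exists_pos_algebraMap_le_iff hP.isHermitian.isSelfAdjoint).2
    fun x hx => hP.isStrictlyPositive.spectrum_pos hx
  refine ⟨c, hc, fun v => ?_⟩
  have h := quad_nonneg (Matrix.le_iff.mp hcP) v
  rw [Algebra.algebraMap_eq_smul_one, quad, sub_mulVec, dotProduct_sub, ← quad,
    ← quad, quad_smul_one] at h
  linarith

lemma mul_dotProduct_le_sum_of_posSemidef {κ ρ : Type*} [Fintype ρ] [DecidableEq ι]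
    (s : Finset κ) (c : κ → ℝ) (N : κ → Matrix ρ ι ℝ) {α : ℝ}
    (h : (∑ t ∈ s, c t • ((N t)ᵀ * N t) - α • (1 : Matrix ι ι ℝ)).PosSemidef) (v : ι → ℝ) :
    α * (v ⬝ᵥ v) ≤ ∑ t ∈ s, c t * (N t *ᵥ v ⬝ᵥ N t *ᵥ v) := by
  have h0 := quad_nonneg h v
  rw [quad, sub_mulVec, dotProduct_sub, smul_mulVec, one_mulVec, dotProduct_smul, smul_eq_mul,
    sum_mulVec, dotProduct_sum] at h0
  have hterm (t : κ) : v ⬝ᵥ (c t • ((N t)ᵀ * N t)) *ᵥ v = c t * (N t *ᵥ v ⬝ᵥ N t *ᵥ v) := by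
    rw [smul_mulVec, dotProduct_smul, ← mulVec_mulVec, dotProduct_mulVec, vecMul_transpose,
      smul_eq_mul]
  simp only [hterm] at h0
  linarith

end QuadraticForm

lemma sum_pow_mul_le_of_le_mul_add {T : ℕ} {μ μ' β : ℝ} (hμ : μ = μ' + β) (hμ0 : 0 ≤ μ)
    {V g : ℕ → ℝ} (hV : ∀ t, 0 ≤ V t) (hstep : ∀ t < T, V (t + 1) ≤ μ' * V t + g t) :
    ∑ t ∈ range T, μ ^ (T - 1 - t) * (β * V t)
      ≤ μ ^ T * V 0 + ∑ t ∈ range T, μ ^ (T - 1 - t) * g t := by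
  have hterm : ∀ t ∈ range T, μ ^ (T - 1 - t) * (β * V t)
      ≤ (μ ^ (T - t) * V t - μ ^ (T - (t + 1)) * V (t + 1)) + μ ^ (T - 1 - t) * g t := by
    intro t ht
    have ht' := mem_range.mp ht
    rw [show T - t = T - 1 - t + 1 by omega, show T - (t + 1) = T - 1 - t by omega, pow_succ]
    have := mul_le_mul_of_nonneg_left (hstep t ht') (pow_nonneg hμ0 (T - 1 - t))
    rw [show β = μ - μ' by linarith]
    linear_combination this
  calc ∑ t ∈ range T, μ ^ (T - 1 - t) * (β * V t)
      ≤ ∑ t ∈ range T, ((μ ^ (T - t) * V t - μ ^ (T - (t + 1)) * V (t + 1))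
          + μ ^ (T - 1 - t) * g t) := sum_le_sum hterm
    _ = μ ^ T * V 0 - V T + ∑ t ∈ range T, μ ^ (T - 1 - t) * g t := by
      rw [sum_add_distrib, sum_range_sub' (fun t => μ ^ (T - t) * V t)]
      simp
    _ ≤ μ ^ T * V 0 + ∑ t ∈ range T, μ ^ (T - 1 - t) * g t := by linarith [hV T]

section MeanValue

variable {E : Type*} [NormedAddCommGroup E] [NormedSpace ℝ E] {κ ρ : Type*} [Fintype κ]
  [Fintype ρ] [DecidableEq ρ]

lemma apply_sub_eq_integral_fderiv {G : E → κ → ℝ} (hG : ContDiff ℝ 1 G) (a b : E) (i : κ) :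
    G b i - G a i = ∫ s in (0 : ℝ)..1, fderiv ℝ G (a + s • (b - a)) (b - a) i := by
  have hpath (s : ℝ) : HasDerivAt (fun τ : ℝ => a + τ • (b - a)) (b - a) s := by
    simpa using ((hasDerivAt_id s).smul_const (b - a)).const_add a
  have hderiv (s : ℝ) : HasDerivAt (fun τ => G (a + τ • (b - a)) i)
      (fderiv ℝ G (a + s • (b - a)) (b - a) i) s :=
    hasDerivAt_pi.mp (((hG.differentiable one_ne_zero) _).hasFDerivAt.comp_hasDerivAt s
      (hpath s)) i
  have hcont : Continuous fun s : ℝ => fderiv ℝ G (a + s • (b - a)) (b - a) i :=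
    (continuous_apply i).comp
      (((hG.continuous_fderiv one_ne_zero).comp (by fun_prop)).clm_apply continuous_const)
  rw [intervalIntegral.integral_eq_sub_of_hasDerivAt (fun s _ => hderiv s)
    (hcont.intervalIntegrable 0 1)]
  simp

lemma fderiv_apply_comp_of_hasFDerivAt {E' : Type*} [NormedAddCommGroup E'] [NormedSpace ℝ E']
    {G : E → κ → ℝ} {ι : E' → E} {J : E' →L[ℝ] E} {a : E'} (hG : DifferentiableAt ℝ G (ι a))
    (hι : HasFDerivAt ι J a) (e : E') (i : κ) :
    fderiv ℝ (fun v => G (ι v) i) a e = fderiv ℝ G (ι a) (J e) i := by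
  have h := (ContinuousLinearMap.proj (R := ℝ) (φ := fun _ : κ => ℝ) i).hasFDerivAt.comp a
    (hG.hasFDerivAt.comp a hι)
  exact congrArg (fun L : E' →L[ℝ] ℝ => L e) h.fderiv

lemma mulVec_of_intervalIntegral {M : ℝ → (ρ → ℝ) →L[ℝ] (κ → ℝ)} (hM : Continuous M) (a b : ℝ)
    (v : ρ → ℝ) :
    (fun i j => ∫ s in a..b, M s (Pi.single j 1) i : Matrix κ ρ ℝ) *ᵥ v
      = fun i => ∫ s in a..b, M s v i := by
  funext i
  have hMv (s : ℝ) : M s v i = ∑ j, M s (Pi.single j 1) i * v j := by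
    have h := congrFun (LinearMap.toMatrix'_mulVec (M s : (ρ → ℝ) →ₗ[ℝ] κ → ℝ) v) i
    simpa [mulVec, dotProduct, LinearMap.toMatrix'_apply] using h.symm
  have hint (j : ρ) :
      IntervalIntegrable (fun s => M s (Pi.single j 1) i * v j) MeasureTheory.volume a b :=
    (((continuous_apply i).comp (hM.clm_apply continuous_const)).mul
      continuous_const).intervalIntegrable a b
  simp only [hMv, mulVec, dotProduct]
  rw [intervalIntegral.integral_finsetSum fun j _ => hint j]
  simp only [intervalIntegral.integral_mul_const]

lemma mulVec_integral_fderiv_slice {G : E → κ → ℝ} (hG : ContDiff ℝ 1 G) {ζ : ℝ → E}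
    (hζ : Continuous ζ) (J : (ρ → ℝ) →L[ℝ] E) {ι : ℝ → (ρ → ℝ) → E} {a : ℝ → ρ → ℝ}
    (hι : ∀ s, HasFDerivAt (ι s) J (a s)) (hιa : ∀ s, ι s (a s) = ζ s) (v : ρ → ℝ) :
    (fun i j => ∫ s in (0 : ℝ)..1, fderiv ℝ (fun e => G (ι s e) i) (a s) (Pi.single j 1) :
        Matrix κ ρ ℝ) *ᵥ v
      = fun i => ∫ s in (0 : ℝ)..1, fderiv ℝ G (ζ s) (J v) i := by
  have hM : Continuous fun s => (fderiv ℝ G (ζ s)).comp J :=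
    ((hG.continuous_fderiv one_ne_zero).comp hζ).clm_comp continuous_const
  have hentry : (fun i j => ∫ s in (0 : ℝ)..1,
        fderiv ℝ (fun e => G (ι s e) i) (a s) (Pi.single j 1) : Matrix κ ρ ℝ)
      = fun i j => ∫ s in (0 : ℝ)..1, (fderiv ℝ G (ζ s)).comp J (Pi.single j 1) i := by
    funext i j
    congr 1
    funext s
    rw [fderiv_apply_comp_of_hasFDerivAt ((hG.differentiable one_ne_zero) _) (hι s), hιa]
    rfl
  rw [hentry, mulVec_of_intervalIntegral hM]
  rfl

end MeanValue

section Linearization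

variable {n m q o k : ℕ}
  (F : (Fin n → ℝ) → (Fin m → ℝ) → (Fin q → ℝ) → (Fin o → ℝ) → (Fin k → ℝ))
  (z zt : Pt n m q o)

lemma Cmat_mulVec
    (hF : ContDiff ℝ 1 (fun ζ : Pt n m q o => F ζ.1 ζ.2.1 ζ.2.2.1 ζ.2.2.2)) (v : Fin n → ℝ) :
    Cmat F z zt *ᵥ v = fun i => ∫ s in (0 : ℝ)..1,
      fderiv ℝ (fun ζ : Pt n m q o => F ζ.1 ζ.2.1 ζ.2.2.1 ζ.2.2.2) (z + s • (zt - z)) (v, 0) i :=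
  mulVec_integral_fderiv_slice hF (by fun_prop) (ContinuousLinearMap.inl ℝ _ _)
    (ι := fun s xv => (xv, (z + s • (zt - z)).2)) (fun _ => hasFDerivAt_prodMk_left _ _)
    (fun _ => rfl) v

lemma Dmat_mulVec
    (hF : ContDiff ℝ 1 (fun ζ : Pt n m q o => F ζ.1 ζ.2.1 ζ.2.2.1 ζ.2.2.2)) (v : Fin q → ℝ) :
    Dmat F z zt *ᵥ v = fun i => ∫ s in (0 : ℝ)..1,
      fderiv ℝ (fun ζ : Pt n m q o => F ζ.1 ζ.2.1 ζ.2.2.1 ζ.2.2.2) (z + s • (zt - z))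
        (0, 0, v, 0) i :=
  mulVec_integral_fderiv_slice hF (by fun_prop)
    ((ContinuousLinearMap.inr ℝ _ _).comp
      ((ContinuousLinearMap.inr ℝ _ _).comp (ContinuousLinearMap.inl ℝ _ _)))
    (ι := fun s wv => ((z + s • (zt - z)).1, (z + s • (zt - z)).2.1, wv,
      (z + s • (zt - z)).2.2.2))
    (fun _ => (hasFDerivAt_prodMk_right _ _).comp _
      ((hasFDerivAt_prodMk_right _ _).comp _ (hasFDerivAt_prodMk_left _ _)))
    (fun _ => rfl) v

lemma Fmat_mulVec
    (hF : ContDiff ℝ 1 (fun ζ : Pt n m q o => F ζ.1 ζ.2.1 ζ.2.2.1 ζ.2.2.2)) (v : Fin o → ℝ) :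
    Fmat F z zt *ᵥ v = fun i => ∫ s in (0 : ℝ)..1,
      fderiv ℝ (fun ζ : Pt n m q o => F ζ.1 ζ.2.1 ζ.2.2.1 ζ.2.2.2) (z + s • (zt - z))
        (0, 0, 0, v) i :=
  mulVec_integral_fderiv_slice hF (by fun_prop)
    ((ContinuousLinearMap.inr ℝ _ _).comp
      ((ContinuousLinearMap.inr ℝ _ _).comp (ContinuousLinearMap.inr ℝ _ _)))
    (ι := fun s pv => ((z + s • (zt - z)).1, (z + s • (zt - z)).2.1,
      (z + s • (zt - z)).2.2.1, pv))
    (fun _ => (hasFDerivAt_prodMk_right _ _).comp _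
      ((hasFDerivAt_prodMk_right _ _).comp _ (hasFDerivAt_prodMk_right _ _)))
    (fun _ => rfl) v

lemma sub_eq_linearization_mulVec
    (hF : ContDiff ℝ 1 (fun ζ : Pt n m q o => F ζ.1 ζ.2.1 ζ.2.2.1 ζ.2.2.2))
    (x xt : Fin n → ℝ) (u : Fin m → ℝ) (w wt : Fin q → ℝ) (p pt : Fin o → ℝ) :
    F x u w p - F xt u wt pt
      = Cmat F (x, u, w, p) (xt, u, wt, pt) *ᵥ (x - xt)
        + Dmat F (x, u, w, p) (xt, u, wt, pt) *ᵥ (w - wt)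
        + Fmat F (x, u, w, p) (xt, u, wt, pt) *ᵥ (p - pt) := by
  set G := fun ζ : Pt n m q o => F ζ.1 ζ.2.1 ζ.2.2.1 ζ.2.2.2
  set z : Pt n m q o := (x, u, w, p)
  set zt : Pt n m q o := (xt, u, wt, pt)
  have hcont (e : Pt n m q o) (i : Fin k) : IntervalIntegrable
      (fun s : ℝ => fderiv ℝ G (z + s • (zt - z)) e i) MeasureTheory.volume 0 1 :=
    ((continuous_apply i).comp (((hF.continuous_fderiv one_ne_zero).comp (by fun_prop)).clm_apply
      continuous_const)).intervalIntegrable 0 1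
  have hsplit : z - zt = (x - xt, 0) + (0, 0, w - wt, 0) + (0, 0, 0, p - pt) := by
    simp [z, zt]
  rw [Cmat_mulVec F z zt hF, Dmat_mulVec F z zt hF, Fmat_mulVec F z zt hF]
  funext i
  have hftc := apply_sub_eq_integral_fderiv hF z zt i
  calc F x u w p i - F xt u wt pt i
      = ∫ s in (0 : ℝ)..1, fderiv ℝ G (z + s • (zt - z)) (z - zt) i := by
        rw [← neg_sub zt z]
        simp only [map_neg, Pi.neg_apply, intervalIntegral.integral_neg, ← hftc]
        simp [G, z, zt]
    _ = _ := by
        simp only [hsplit, map_add, Pi.add_apply]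
        rw [intervalIntegral.integral_add ((hcont _ i).add (hcont _ i)) (hcont _ i),
          intervalIntegral.integral_add (hcont _ i) (hcont _ i)]

end Linearization

section OneStep

variable {ιx ιw ιp ιy : Type*} [Fintype ιx] [Fintype ιw] [Fintype ιp]
  {A : Matrix ιx ιx ℝ} {B : Matrix ιx ιw ℝ} {E : Matrix ιx ιp ℝ} {C : Matrix ιy ιx ℝ}
  {D : Matrix ιy ιw ℝ} {F : Matrix ιy ιp ℝ} {L : Matrix ιx ιy ℝ} {Y Y' : Matrix ιx ιp ℝ}
  {dx dx' : ιx → ℝ} {dw : ιw → ℝ} {dp : ιp → ℝ} {dy : ιy → ℝ}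

lemma regressor_mulVec_eq (hdy : dy = C *ᵥ dx + D *ᵥ dw + F *ᵥ dp) :
    (C * Y + F) *ᵥ dp = dy - D *ᵥ dw - C *ᵥ (dx - Y *ᵥ dp) := by
  subst hdy
  simp only [add_mulVec, mulVec_sub, ← mulVec_mulVec]
  abel

variable [Fintype ιy]

lemma error_succ_eq (hdx' : dx' = A *ᵥ dx + B *ᵥ dw + E *ᵥ dp)
    (hdy : dy = C *ᵥ dx + D *ᵥ dw + F *ᵥ dp) (hY' : Y' = (A + L * C) * Y + E + L * F) :
    dx' - Y' *ᵥ dp = (A + L * C) *ᵥ (dx - Y *ᵥ dp) + ((B + L * D) *ᵥ dw - L *ᵥ dy) := by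
  subst hdx' hdy hY'
  simp only [add_mulVec, mulVec_add, mulVec_sub, ← mulVec_mulVec]
  abel

lemma residual_dotProduct_self_le {Bbar Dbar Lbar : ℝ}
    (hB : ∀ v, eucNorm (B *ᵥ v) ≤ Bbar * eucNorm v) (hD : ∀ v, eucNorm (D *ᵥ v) ≤ Dbar * eucNorm v)
    (hL : ∀ v, eucNorm (L *ᵥ v) ≤ Lbar * eucNorm v) (dw : ιw → ℝ) (dy : ιy → ℝ) :
    ((B + L * D) *ᵥ dw - L *ᵥ dy) ⬝ᵥ ((B + L * D) *ᵥ dw - L *ᵥ dy)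
      ≤ (4 * Bbar ^ 2 + 4 * Lbar ^ 2 * Dbar ^ 2) * (dw ⬝ᵥ dw) + 2 * Lbar ^ 2 * (dy ⬝ᵥ dy) := by
  rw [add_mulVec, ← mulVec_mulVec]
  have hBw := dotProduct_self_le_of_eucNorm_le (hB dw)
  have hDw := dotProduct_self_le_of_eucNorm_le (hD dw)
  have hLDw := dotProduct_self_le_of_eucNorm_le (hL (D *ᵥ dw))
  have hLy := dotProduct_self_le_of_eucNorm_le (hL dy)
  have hsum := dotProduct_self_add_le (B *ᵥ dw) (L *ᵥ D *ᵥ dw)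
  have hdiff := dotProduct_self_sub_le (B *ᵥ dw + L *ᵥ D *ᵥ dw) (L *ᵥ dy)
  nlinarith [mul_le_mul_of_nonneg_left hDw (sq_nonneg Lbar)]

lemma quad_error_succ_le {P : Matrix ιx ιx ℝ} (hP : P.PosSemidef) {η ε : ℝ} (hε : 0 < ε)
    (hΦ : (η • P - (A + L * C)ᵀ * P * (A + L * C)).PosSemidef) {Bbar Dbar Lbar : ℝ}
    (hB : ∀ v, eucNorm (B *ᵥ v) ≤ Bbar * eucNorm v) (hD : ∀ v, eucNorm (D *ᵥ v) ≤ Dbar * eucNorm v)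
    (hL : ∀ v, eucNorm (L *ᵥ v) ≤ Lbar * eucNorm v)
    (hdx' : dx' = A *ᵥ dx + B *ᵥ dw + E *ᵥ dp) (hdy : dy = C *ᵥ dx + D *ᵥ dw + F *ᵥ dp)
    (hY' : Y' = (A + L * C) * Y + E + L * F) :
    quad P (dx' - Y' *ᵥ dp) ≤ (1 + ε) * η * quad P (dx - Y *ᵥ dp)
      + (1 + ε⁻¹) * (∑ i, ∑ j, |P i j|)
        * ((4 * Bbar ^ 2 + 4 * Lbar ^ 2 * Dbar ^ 2) * (dw ⬝ᵥ dw) + 2 * Lbar ^ 2 * (dy ⬝ᵥ dy)) := by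
  set r := (B + L * D) *ᵥ dw - L *ᵥ dy
  have hr := mul_le_mul_of_nonneg_left (residual_dotProduct_self_le hB hD hL dw dy)
    (by positivity : 0 ≤ (1 + ε⁻¹) * ∑ i, ∑ j, |P i j|)
  rw [error_succ_eq hdx' hdy hY']
  calc quad P ((A + L * C) *ᵥ (dx - Y *ᵥ dp) + r)
      ≤ (1 + ε) * quad P ((A + L * C) *ᵥ (dx - Y *ᵥ dp)) + (1 + ε⁻¹) * quad P r :=
        quad_add_le hP hε _ _
    _ ≤ (1 + ε) * (η * quad P (dx - Y *ᵥ dp))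
          + (1 + ε⁻¹) * ((∑ i, ∑ j, |P i j|) * (r ⬝ᵥ r)) := by
        gcongr
        · exact quad_mulVec_le hΦ _
        · exact quad_le_sum_abs_mul P r
    _ ≤ _ := by linarith

lemma regressor_dotProduct_self_le {P : Matrix ιx ιx ℝ} {l : ℝ} (hl : 0 < l)
    (hlP : ∀ v, l * (v ⬝ᵥ v) ≤ quad P v) {γ Cbar Dbar : ℝ} (hγ : 0 ≤ γ)
    (hC : ∀ v, eucNorm (C *ᵥ v) ≤ Cbar * eucNorm v) (hD : ∀ v, eucNorm (D *ᵥ v) ≤ Dbar * eucNorm v)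
    (hdy : dy = C *ᵥ dx + D *ᵥ dw + F *ᵥ dp) :
    γ * ((C * Y + F) *ᵥ dp ⬝ᵥ (C * Y + F) *ᵥ dp)
      ≤ 3 * γ * (dy ⬝ᵥ dy) + 3 * γ * Dbar ^ 2 * (dw ⬝ᵥ dw)
        + 3 * γ * Cbar ^ 2 / l * quad P (dx - Y *ᵥ dp) := by
  set ξ := dx - Y *ᵥ dp
  have h3 := dotProduct_self_sub_sub_le dy (D *ᵥ dw) (C *ᵥ ξ)
  have hDw := dotProduct_self_le_of_eucNorm_le (hD dw)
  have hCξ := dotProduct_self_le_of_eucNorm_le (hC ξ)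
  have hξ : 3 * γ * Cbar ^ 2 * (ξ ⬝ᵥ ξ) ≤ 3 * γ * Cbar ^ 2 / l * quad P ξ := by
    rw [show 3 * γ * Cbar ^ 2 * (ξ ⬝ᵥ ξ) = 3 * γ * Cbar ^ 2 / l * (l * (ξ ⬝ᵥ ξ)) by field_simp]
    exact mul_le_mul_of_nonneg_left (hlP ξ) (by positivity)
  rw [regressor_mulVec_eq hdy]
  nlinarith [mul_le_mul_of_nonneg_left h3 hγ, mul_le_mul_of_nonneg_left hDw hγ,
    mul_le_mul_of_nonneg_left hCξ hγ]

end OneStep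

lemma mul_dotProduct_le_of_gramian {ι ρ : Type*} [Fintype ι] [Fintype ρ] [DecidableEq ι]
    {T : ℕ} {μ μ' β α γ : ℝ} (hμ : μ = μ' + β) (hμ0 : 0 ≤ μ) (hγ : 0 ≤ γ)
    {N : ℕ → Matrix ρ ι ℝ}
    (hgram : (∑ t ∈ range T, μ ^ (T - 1 - t) • ((N t)ᵀ * N t) - α • (1 : Matrix ι ι ℝ)).PosSemidef)
    (v : ι → ℝ) {V e g : ℕ → ℝ} (hV : ∀ t, 0 ≤ V t)
    (hstep : ∀ t < T, V (t + 1) ≤ μ' * V t + g t)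
    (hout : ∀ t < T, γ * (N t *ᵥ v ⬝ᵥ N t *ᵥ v) ≤ e t + β * V t) :
    α * γ * (v ⬝ᵥ v) ≤ μ ^ T * V 0 + ∑ t ∈ range T, μ ^ (T - 1 - t) * (e t + g t) := by
  have hweight (t : ℕ) : 0 ≤ μ ^ (T - 1 - t) := pow_nonneg hμ0 _
  calc α * γ * (v ⬝ᵥ v)
      ≤ γ * ∑ t ∈ range T, μ ^ (T - 1 - t) * (N t *ᵥ v ⬝ᵥ N t *ᵥ v) := by
        rw [mul_comm α, mul_assoc]
        exact mul_le_mul_of_nonneg_left (mul_dotProduct_le_sum_of_posSemidef _ _ _ hgram v) hγ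
    _ ≤ ∑ t ∈ range T, μ ^ (T - 1 - t) * (e t + β * V t) := by
        rw [mul_sum]
        refine sum_le_sum fun t ht => ?_
        rw [mul_left_comm]
        exact mul_le_mul_of_nonneg_left (hout t (mem_range.mp ht)) (hweight t)
    _ = ∑ t ∈ range T, μ ^ (T - 1 - t) * e t + ∑ t ∈ range T, μ ^ (T - 1 - t) * (β * V t) := by
        rw [← sum_add_distrib]
        simp only [mul_add]
    _ ≤ ∑ t ∈ range T, μ ^ (T - 1 - t) * e t
          + (μ ^ T * V 0 + ∑ t ∈ range T, μ ^ (T - 1 - t) * g t) := by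
        gcongr
        exact sum_pow_mul_le_of_le_mul_add hμ hμ0 hV hstep
    _ = μ ^ T * V 0 + ∑ t ∈ range T, μ ^ (T - 1 - t) * (e t + g t) := by
        simp only [mul_add, sum_add_distrib]
        ring

theorem gramian_implies_excitation_general
    {n m q o r : ℕ}
    (f : (Fin n → ℝ) → (Fin m → ℝ) → (Fin q → ℝ) → (Fin o → ℝ) → (Fin n → ℝ))
    (h : (Fin n → ℝ) → (Fin m → ℝ) → (Fin q → ℝ) → (Fin o → ℝ) → (Fin r → ℝ))
    (hf : ContDiff ℝ 2 (fun z : Pt n m q o => f z.1 z.2.1 z.2.2.1 z.2.2.2))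
    (hh : ContDiff ℝ 2 (fun z : Pt n m q o => h z.1 z.2.1 z.2.2.1 z.2.2.2))
    (Xs : Set (Fin n → ℝ)) (Us : Set (Fin m → ℝ)) (Ws : Set (Fin q → ℝ))
    (Ps : Set (Fin o → ℝ))
    -- Assumption 4: bounded linearizations
    (Bbar Cbar Dbar : ℝ)
    (hB : ∀ z zt, ZmemT f Xs Us Ws Ps z → ZmemT f Xs Us Ws Ps zt →
      ∀ v : Fin q → ℝ, eucNorm ((Bmat f z zt).mulVec v) ≤ Bbar * eucNorm v)
    (hC : ∀ z zt, ZmemT f Xs Us Ws Ps z → ZmemT f Xs Us Ws Ps zt →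
      ∀ v : Fin n → ℝ, eucNorm ((Cmat h z zt).mulVec v) ≤ Cbar * eucNorm v)
    (hD : ∀ z zt, ZmemT f Xs Us Ws Ps z → ZmemT f Xs Us Ws Ps zt →
      ∀ v : Fin q → ℝ, eucNorm ((Dmat h z zt).mulVec v) ≤ Dbar * eucNorm v)
    -- Assumption 5: state detectability via output injection
    (L : Pt n m q o → Pt n m q o → Matrix (Fin n) (Fin r) ℝ)
    (Lbar : ℝ)
    (hLbnd : ∀ z zt, ZmemT f Xs Us Ws Ps z → ZmemT f Xs Us Ws Ps zt →
      ∀ v : Fin r → ℝ, eucNorm ((L z zt).mulVec v) ≤ Lbar * eucNorm v)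
    (P : Matrix (Fin n) (Fin n) ℝ) (hP : P.PosDef)
    (η : ℝ) (hη0 : 0 < η)
    (hΦ : ∀ z zt, ZmemT f Xs Us Ws Ps z → ZmemT f Xs Us Ws Ps zt →
      ((η • P - (Amat f z zt + L z zt * Cmat h z zt)ᵀ * P *
        (Amat f z zt + L z zt * Cmat h z zt)) : Matrix (Fin n) (Fin n) ℝ).PosSemidef)
    (lminP : ℝ)
    (hlminP : IsGreatest {l : ℝ | ∀ v : Fin n → ℝ, l * (v ⬝ᵥ v) ≤ quad P v} lminP)
    -- constants
    (T : ℕ) (ε γ α : ℝ) (hε : 0 < ε) (hγ : 0 < γ) (hα : 0 < α)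
    (μ : ℝ) (hμdef : μ = (1 + ε) * η + 3 * γ * Cbar ^ 2 / lminP) (hμ1 : μ < 1)
    -- the trajectory pair of length T
    (x xt : ℕ → Fin n → ℝ) (u : ℕ → Fin m → ℝ) (w wt : ℕ → Fin q → ℝ)
    (p pt : Fin o → ℝ) (y yt : ℕ → Fin r → ℝ)
    (z zt : ℕ → Pt n m q o)
    (hz : ∀ s, z s = (x s, u s, w s, p)) (hzt : ∀ s, zt s = (xt s, u s, wt s, pt))
    (hZ : ∀ s < T, ZmemT f Xs Us Ws Ps (z s))
    (hZt : ∀ s < T, ZmemT f Xs Us Ws Ps (zt s))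
    (hdyn : ∀ s < T, x (s + 1) = f (x s) (u s) (w s) p)
    (hdynt : ∀ s < T, xt (s + 1) = f (xt s) (u s) (wt s) pt)
    (hy : ∀ s < T, y s = h (x s) (u s) (w s) p)
    (hyt : ∀ s < T, yt s = h (xt s) (u s) (wt s) pt)
    -- the regressor recursion
    (Y : ℕ → Matrix (Fin n) (Fin o) ℝ) (hY0 : Y 0 = 0)
    (hYrec : ∀ s < T, Y (s + 1)
      = (Amat f (z s) (zt s) + L (z s) (zt s) * Cmat h (z s) (zt s)) * Y s
        + Emat f (z s) (zt s) + L (z s) (zt s) * Fmat h (z s) (zt s))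
    -- the Gramian condition `𝒞_T ⪰ α I`
    (hGram : ((∑ s ∈ Finset.range T, μ ^ (T - 1 - s) •
        ((Cmat h (z s) (zt s) * Y s + Fmat h (z s) (zt s))ᵀ *
          (Cmat h (z s) (zt s) * Y s + Fmat h (z s) (zt s))))
        - α • (1 : Matrix (Fin o) (Fin o) ℝ)).PosSemidef) :
    ∃ (Qp Sp Rp : Matrix _ _ ℝ) (ηp : ℝ),
      Qp.PosDef ∧ Sp.PosDef ∧ Rp.PosDef ∧ 0 ≤ ηp ∧ ηp < 1
      ∧ ηp = μ ∧ Sp = (α * γ) • (1 : Matrix (Fin o) (Fin o) ℝ)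
      ∧ quad Sp (p - pt)
          ≤ ηp ^ T * quad P (x 0 - xt 0)
            + ∑ jj ∈ Finset.range T, ηp ^ (T - 1 - jj) *
                (quad Qp (w jj - wt jj) + quad Rp (y jj - yt jj)) := by
  obtain rfl : z = fun s => (x s, u s, w s, p) := funext hz
  obtain rfl : zt = fun s => (xt s, u s, wt s, pt) := funext hzt
  obtain ⟨c, hc, hcP⟩ := hP.exists_pos_mul_dotProduct_le_quad
  have hlmin : 0 < lminP := hc.trans_le (hlminP.2 hcP)
  have hμ0 : 0 ≤ μ := hμdef ▸ by positivity
  -- `Amat f`, `Bmat f`, `Emat f` unfold to `Cmat f`, `Dmat f`, `Fmat f`.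
  have hdx (t : ℕ) (ht : t < T) : x (t + 1) - xt (t + 1)
      = Amat f (x t, u t, w t, p) (xt t, u t, wt t, pt) *ᵥ (x t - xt t)
        + Bmat f (x t, u t, w t, p) (xt t, u t, wt t, pt) *ᵥ (w t - wt t)
        + Emat f (x t, u t, w t, p) (xt t, u t, wt t, pt) *ᵥ (p - pt) := by
    rw [hdyn t ht, hdynt t ht]
    exact sub_eq_linearization_mulVec f (hf.of_le one_le_two) _ _ _ _ _ _ _
  have hdy (t : ℕ) (ht : t < T) : y t - yt t
      = Cmat h (x t, u t, w t, p) (xt t, u t, wt t, pt) *ᵥ (x t - xt t)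
        + Dmat h (x t, u t, w t, p) (xt t, u t, wt t, pt) *ᵥ (w t - wt t)
        + Fmat h (x t, u t, w t, p) (xt t, u t, wt t, pt) *ᵥ (p - pt) := by
    rw [hy t ht, hyt t ht]
    exact sub_eq_linearization_mulVec h (hh.of_le one_le_two) _ _ _ _ _ _ _
  set K := ∑ i, ∑ j, |P i j|
  have key := mul_dotProduct_le_of_gramian hμdef hμ0 hγ.le hGram (p - pt)
    (V := fun t => quad P (x t - xt t - Y t *ᵥ (p - pt)))
    (e := fun t => 3 * γ * ((y t - yt t) ⬝ᵥ (y t - yt t))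
      + 3 * γ * Dbar ^ 2 * ((w t - wt t) ⬝ᵥ (w t - wt t)))
    (g := fun t => (1 + ε⁻¹) * K * ((4 * Bbar ^ 2 + 4 * Lbar ^ 2 * Dbar ^ 2)
      * ((w t - wt t) ⬝ᵥ (w t - wt t)) + 2 * Lbar ^ 2 * ((y t - yt t) ⬝ᵥ (y t - yt t))))
    (fun t => quad_nonneg hP.posSemidef _)
    (fun t ht => quad_error_succ_le hP.posSemidef hε (hΦ _ _ (hZ t ht) (hZt t ht))
      (hB _ _ (hZ t ht) (hZt t ht)) (hD _ _ (hZ t ht) (hZt t ht))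
      (hLbnd _ _ (hZ t ht) (hZt t ht)) (hdx t ht) (hdy t ht) (hYrec t ht))
    (fun t ht => regressor_dotProduct_self_le hlmin hlminP.1 hγ.le
      (hC _ _ (hZ t ht) (hZt t ht)) (hD _ _ (hZ t ht) (hZt t ht)) (hdy t ht))
  -- The summand `γ` in `Q_p` only serves to make it positive definite.
  refine ⟨(γ + 3 * γ * Dbar ^ 2 + (1 + ε⁻¹) * K * (4 * Bbar ^ 2 + 4 * Lbar ^ 2 * Dbar ^ 2)) • 1,
    (α * γ) • 1, (3 * γ + (1 + ε⁻¹) * K * (2 * Lbar ^ 2)) • 1, μ,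
    PosDef.one.smul (by positivity), PosDef.one.smul (by positivity),
    PosDef.one.smul (by positivity), hμ0, hμ1, rfl, rfl, ?_⟩
  rw [hY0, zero_mulVec, sub_zero] at key
  simp only [quad_smul_one]
  refine key.trans (add_le_add le_rfl (sum_le_sum fun t _ => mul_le_mul_of_nonneg_left ?_
    (pow_nonneg hμ0 _)))
  nlinarith [dotProduct_self_nonneg (w t - wt t)]

/-- **Proposition 2 (sufficient condition for excitation).**
Under Assumptions 4 and 5, if the Gramian `𝒞_T = Σ_{t<T} μ^{T−1−t} Ȳ_tᵀȲ_t` built from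
the transformed regressor `Ȳ_t = C_tY_t + F_t`, `Y_{t+1} = Φ_tY_t + E_t + L_tF_t`,
`Y_0 = 0`, satisfies `𝒞_T ⪰ αI` for some `α > 0`, then there exist `Q_p,S_p,R_p ≻ 0`
and `η_p ∈ [0,1)` (one may take `η_p = μ`, `S_p = αγI`) such that the trajectory pair
belongs to `𝔼_T` with `P_p = P`. -/
theorem gramian_implies_excitation
    {n m q o r : ℕ}
    (f : (Fin n → ℝ) → (Fin m → ℝ) → (Fin q → ℝ) → (Fin o → ℝ) → (Fin n → ℝ))
    (h : (Fin n → ℝ) → (Fin m → ℝ) → (Fin q → ℝ) → (Fin o → ℝ) → (Fin r → ℝ))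
    (hf : ContDiff ℝ 2 (fun z : Pt n m q o => f z.1 z.2.1 z.2.2.1 z.2.2.2))
    (hh : ContDiff ℝ 2 (fun z : Pt n m q o => h z.1 z.2.1 z.2.2.1 z.2.2.2))
    (Xs : Set (Fin n → ℝ)) (Us : Set (Fin m → ℝ)) (Ws : Set (Fin q → ℝ))
    (Ps : Set (Fin o → ℝ))
    -- Assumption 4: bounded linearizations
    (Bbar Cbar Dbar : ℝ)
    (hB : ∀ z zt, ZmemT f Xs Us Ws Ps z → ZmemT f Xs Us Ws Ps zt →
      ∀ v : Fin q → ℝ, eucNorm ((Bmat f z zt).mulVec v) ≤ Bbar * eucNorm v)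
    (hC : ∀ z zt, ZmemT f Xs Us Ws Ps z → ZmemT f Xs Us Ws Ps zt →
      ∀ v : Fin n → ℝ, eucNorm ((Cmat h z zt).mulVec v) ≤ Cbar * eucNorm v)
    (hD : ∀ z zt, ZmemT f Xs Us Ws Ps z → ZmemT f Xs Us Ws Ps zt →
      ∀ v : Fin q → ℝ, eucNorm ((Dmat h z zt).mulVec v) ≤ Dbar * eucNorm v)
    -- Assumption 5: state detectability via output injection
    (L : Pt n m q o → Pt n m q o → Matrix (Fin n) (Fin r) ℝ)
    (Lbar : ℝ) (hLbar : 0 < Lbar)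
    (hLbnd : ∀ z zt, ZmemT f Xs Us Ws Ps z → ZmemT f Xs Us Ws Ps zt →
      ∀ v : Fin r → ℝ, eucNorm ((L z zt).mulVec v) ≤ Lbar * eucNorm v)
    (P : Matrix (Fin n) (Fin n) ℝ) (hP : P.PosDef)
    (η : ℝ) (hη0 : 0 < η) (hη1 : η < 1)
    (hΦ : ∀ z zt, ZmemT f Xs Us Ws Ps z → ZmemT f Xs Us Ws Ps zt →
      ((η • P - (Amat f z zt + L z zt * Cmat h z zt)ᵀ * P *
        (Amat f z zt + L z zt * Cmat h z zt)) : Matrix (Fin n) (Fin n) ℝ).PosSemidef)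
    (lminP : ℝ)
    (hlminP : IsGreatest {l : ℝ | ∀ v : Fin n → ℝ, l * (v ⬝ᵥ v) ≤ quad P v} lminP)
    -- constants
    (T : ℕ) (hT : 1 ≤ T) (ε γ α : ℝ) (hε : 0 < ε) (hγ : 0 < γ) (hα : 0 < α)
    (μ : ℝ) (hμdef : μ = (1 + ε) * η + 3 * γ * Cbar ^ 2 / lminP) (hμ1 : μ < 1)
    -- the trajectory pair of length T
    (x xt : ℕ → Fin n → ℝ) (u : ℕ → Fin m → ℝ) (w wt : ℕ → Fin q → ℝ)
    (p pt : Fin o → ℝ) (y yt : ℕ → Fin r → ℝ)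
    (z zt : ℕ → Pt n m q o)
    (hz : ∀ s, z s = (x s, u s, w s, p)) (hzt : ∀ s, zt s = (xt s, u s, wt s, pt))
    (hZ : ∀ s < T, ZmemT f Xs Us Ws Ps (z s))
    (hZt : ∀ s < T, ZmemT f Xs Us Ws Ps (zt s))
    (hdyn : ∀ s < T, x (s + 1) = f (x s) (u s) (w s) p)
    (hdynt : ∀ s < T, xt (s + 1) = f (xt s) (u s) (wt s) pt)
    (hy : ∀ s < T, y s = h (x s) (u s) (w s) p)
    (hyt : ∀ s < T, yt s = h (xt s) (u s) (wt s) pt)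
    -- the regressor recursion
    (Y : ℕ → Matrix (Fin n) (Fin o) ℝ) (hY0 : Y 0 = 0)
    (hYrec : ∀ s < T, Y (s + 1)
      = (Amat f (z s) (zt s) + L (z s) (zt s) * Cmat h (z s) (zt s)) * Y s
        + Emat f (z s) (zt s) + L (z s) (zt s) * Fmat h (z s) (zt s))
    -- the Gramian condition `𝒞_T ⪰ α I`
    (hGram : ((∑ s ∈ Finset.range T, μ ^ (T - 1 - s) •
        ((Cmat h (z s) (zt s) * Y s + Fmat h (z s) (zt s))ᵀ *
          (Cmat h (z s) (zt s) * Y s + Fmat h (z s) (zt s))))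
        - α • (1 : Matrix (Fin o) (Fin o) ℝ)).PosSemidef) :
    ∃ (Qp Sp Rp : Matrix _ _ ℝ) (ηp : ℝ),
      Qp.PosDef ∧ Sp.PosDef ∧ Rp.PosDef ∧ 0 ≤ ηp ∧ ηp < 1
      ∧ ηp = μ ∧ Sp = (α * γ) • (1 : Matrix (Fin o) (Fin o) ℝ)
      ∧ quad Sp (p - pt)
          ≤ ηp ^ T * quad P (x 0 - xt 0)
            + ∑ jj ∈ Finset.range T, ηp ^ (T - 1 - jj) *
                (quad Qp (w jj - wt jj) + quad Rp (y jj - yt jj)) :=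
  gramian_implies_excitation_general f h hf hh Xs Us Ws Ps Bbar Cbar Dbar hB hC hD L Lbar hLbnd P hP
    η hη0 hΦ lminP hlminP T ε γ α hε hγ hα μ hμdef hμ1 x xt u w wt p pt y yt z zt hz hzt hZ hZt hdyn
    hdynt hy hyt Y hY0 hYrec hGram
end

section
/- (One-step decrease of the combined excitation Lyapunov function) Let x, x̃, x⁺, x̃⁺ ∈ ℝ^n, w, w̃ ∈ ℝ^q, p, p̃ ∈ ℝ^o, y, ỹ ∈ ℝ^r and matrices A, B, C, D, E, F, L, Y, Y⁺ be as follows: x⁺ − x̃⁺ = A(x−x̃) + B(w−w̃) + E(p−p̃), y − ỹ = C(x−x̃) + D(w−w̃) + F(p−p̃), Φ := A + LC with ΦᵀPΦ ⪯ ηP for a symmetric positive definite P and η ∈ [0,1), ‖C‖ ≤ C̄ (spectral norm), and Y⁺ = ΦY + E + LF. Let S ∈ ℝ^{o×o} be symmetric positive semidefinite, fix ε > 0, γ > 0, set μ := (1+ε)η + 3γC̄²/λ_min(P) and S⁺ := μS + ȲᵀȲ with Ȳ := CY + F. Define ζ := x − Yp, ζ̃ := x̃ − Yp̃, ζ⁺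 := x⁺ − Y⁺p, ζ̃⁺ := x̃⁺ − Y⁺p̃, W := ‖ζ−ζ̃‖²_P + γ‖p−p̃‖²_S, and W⁺ := ‖ζ⁺−ζ̃⁺‖²_P + γ‖p−p̃‖²_{S⁺}. Then W⁺ ≤ μW + (2(1+ε)/ε)(‖(B+LD)(w−w̃)‖²_P + ‖L(y−ỹ)‖²_P) + 3γ(‖D(w−w̃)‖² + ‖y−ỹ‖²). -/
/-!
With `Φ := A + LC` and `Y⁺ = ΦY + E + LF`, the transformed error obeys
`ζ⁺ - ζ̃⁺ = Φ(ζ - ζ̃) + ((B + LD)(w - w̃) - L(y - ỹ))`, and the output equation gives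
`Ȳ(p - p̃) = (y - ỹ) - D(w - w̃) - C(ζ - ζ̃)`. Young's inequality with weight `ε` on the first
identity and the contraction `ΦᵀPΦ ⪯ ηP` bound the `P`-part of `W⁺`; in the `S⁺`-part the term
`‖Ȳ(p - p̃)‖²` is split by Jensen's inequality `‖a + b + c‖² ≤ 3(‖a‖² + ‖b‖² + ‖c‖²)`, and
`‖C(ζ - ζ̃)‖² ≤ C̄²‖ζ - ζ̃‖² ≤ (C̄²/λ_min(P))‖ζ - ζ̃‖²_P` is absorbed into `μW`.
-/

open Matrix

/-- Euclidean norm of a vector. -/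
noncomputable def euclNorm {ι : Type*} [Fintype ι] (v : ι → ℝ) : ℝ :=
  Real.sqrt (v ⬝ᵥ v)

section QuadraticForm

variable {ι κ : Type*} [Fintype ι] [Fintype κ]

lemma quad_nonneg_s13 {Q : Matrix ι ι ℝ} (hQ : Q.PosSemidef) (v : ι → ℝ) : 0 ≤ quad Q v := by
  simpa [quad] using hQ.dotProduct_mulVec_nonneg v

lemma quad_one [DecidableEq ι] (v : ι → ℝ) : quad 1 v = v ⬝ᵥ v := by
  rw [quad, one_mulVec]

lemma quad_neg (Q : Matrix ι ι ℝ) (v : ι → ℝ) : quad Q (-v) = quad Q v := by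
  simp [quad, mulVec_neg]

lemma quad_smul_add_matrix (c : ℝ) (Q R : Matrix ι ι ℝ) (v : ι → ℝ) :
    quad (c • Q + R) v = c * quad Q v + quad R v := by
  simp [quad, add_mulVec, smul_mulVec, dotProduct_add, dotProduct_smul]

lemma quad_mulVec (Q : Matrix κ κ ℝ) (M : Matrix κ ι ℝ) (v : ι → ℝ) :
    quad Q (M *ᵥ v) = quad (Mᵀ * Q * M) v := by
  simp only [quad, ← mulVec_mulVec]
  rw [dotProduct_mulVec v, vecMul_transpose]

lemma quad_transpose_mul_self [DecidableEq κ] (M : Matrix κ ι ℝ) (v : ι → ℝ) :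
    quad (Mᵀ * M) v = (M *ᵥ v) ⬝ᵥ (M *ᵥ v) := by
  rw [← quad_one, quad_mulVec, Matrix.mul_one]

lemma quad_mulVec_le_of_posSemidef {Q M : Matrix ι ι ℝ} {η : ℝ}
    (hM : (η • Q - Mᵀ * Q * M).PosSemidef) (v : ι → ℝ) : quad Q (M *ᵥ v) ≤ η * quad Q v := by
  have h := quad_nonneg_s13 hM v
  simp only [quad, sub_mulVec, smul_mulVec, dotProduct_sub, dotProduct_smul, smul_eq_mul] at h
  rw [quad_mulVec]
  unfold quad
  linarith

lemma dotProduct_mulVec_comm_of_isHermitian {Q : Matrix ι ι ℝ} (hQ : Q.IsHermitian)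
    (a b : ι → ℝ) :
    b ⬝ᵥ Q *ᵥ a = a ⬝ᵥ Q *ᵥ b := by
  rw [dotProduct_mulVec, ← mulVec_transpose, ← conjTranspose_eq_transpose_of_trivial, hQ,
    dotProduct_comm]

lemma quad_add_s13 {Q : Matrix ι ι ℝ} (hQ : Q.IsHermitian) (a b : ι → ℝ) :
    quad Q (a + b) = quad Q a + 2 * (a ⬝ᵥ Q *ᵥ b) + quad Q b := by
  simp only [quad, mulVec_add, dotProduct_add, add_dotProduct,
    dotProduct_mulVec_comm_of_isHermitian hQ a b]
  ring

lemma quad_add_le_s13 {Q : Matrix ι ι ℝ} (hQ : Q.PosSemidef) {ε : ℝ} (hε : 0 < ε) (a b : ι → ℝ) :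
    quad Q (a + b) ≤ (1 + ε) * quad Q a + (1 + ε) / ε * quad Q b := by
  have h := quad_nonneg_s13 hQ (ε • a - b)
  simp only [quad, mulVec_sub, mulVec_smul, dotProduct_sub, sub_dotProduct, dotProduct_smul,
    smul_dotProduct, smul_eq_mul, dotProduct_mulVec_comm_of_isHermitian hQ.1 a b] at h
  have hab : 2 * (a ⬝ᵥ Q *ᵥ b) ≤ ε * quad Q a + quad Q b / ε := by
    rw [← mul_le_mul_iff_right₀ hε, mul_add, mul_div_cancel₀ _ hε.ne']
    unfold quad
    linear_combination h
  have hb : (1 + ε) / ε * quad Q b = quad Q b / ε + quad Q b := by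
    field_simp
  rw [quad_add_s13 hQ.1, hb]
  linarith

lemma quad_sub_le {Q : Matrix ι ι ℝ} (hQ : Q.PosSemidef) (a b : ι → ℝ) :
    quad Q (a - b) ≤ 2 * quad Q a + 2 * quad Q b := by
  simpa [sub_eq_add_neg, quad_neg, one_add_one_eq_two] using quad_add_le_s13 hQ one_pos a (-b)

lemma quad_add_add_le {Q : Matrix ι ι ℝ} (hQ : Q.PosSemidef) (a b c : ι → ℝ) :
    quad Q (a + b + c) ≤ 3 * (quad Q a + quad Q b + quad Q c) := by
  have h := quad_add_le_s13 hQ two_pos a (b + c)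
  have hbc := quad_add_le_s13 hQ one_pos b c
  rw [add_assoc]
  norm_num at h hbc
  linarith

end QuadraticForm

lemma euclNorm_sq {ι : Type*} [Fintype ι] (v : ι → ℝ) : euclNorm v ^ 2 = v ⬝ᵥ v :=
  Real.sq_sqrt (dotProduct_self_star_nonneg v)

lemma dotProduct_mulVec_self_le_of_euclNorm_le {ι κ : Type*} [Fintype ι] [Fintype κ]
    {C : Matrix κ ι ℝ} {c : ℝ} (hC : ∀ v, euclNorm (C *ᵥ v) ≤ c * euclNorm v) (v : ι → ℝ) :
    (C *ᵥ v) ⬝ᵥ (C *ᵥ v) ≤ c ^ 2 * (v ⬝ᵥ v) := by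
  rw [← euclNorm_sq, ← euclNorm_sq, ← mul_pow]
  exact pow_le_pow_left₀ (Real.sqrt_nonneg _) (hC v) 2

lemma dotProduct_mulVec_self_le_div_mul_quad {ι κ : Type*} [Fintype ι] [Fintype κ]
    {C : Matrix κ ι ℝ} {P : Matrix ι ι ℝ} {c l : ℝ}
    (hC : ∀ v, euclNorm (C *ᵥ v) ≤ c * euclNorm v) (hl : 0 < l)
    (hP : ∀ v, l * (v ⬝ᵥ v) ≤ quad P v) (v : ι → ℝ) :
    (C *ᵥ v) ⬝ᵥ (C *ᵥ v) ≤ c ^ 2 / l * quad P v :=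
  calc _ ≤ c ^ 2 * (v ⬝ᵥ v) := dotProduct_mulVec_self_le_of_euclNorm_le hC v
    _ ≤ c ^ 2 * (quad P v / l) := by
      gcongr
      rw [le_div_iff₀ hl, mul_comm]
      exact hP v
    _ = c ^ 2 / l * quad P v := by ring

namespace Matrix.PosDef

variable {ι : Type*} [Fintype ι] {P : Matrix ι ι ℝ}

open scoped MatrixOrder in
lemma exists_pos_mul_dotProduct_self_le [DecidableEq ι] [Nonempty ι] (hP : P.PosDef) :
    ∃ c > 0, ∀ v : ι → ℝ, c * (v ⬝ᵥ v) ≤ quad P v := by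
  obtain ⟨c, hc, hcP⟩ := (CFC.exists_pos_algebraMap_le_iff hP.isHermitian.isSelfAdjoint).2
    fun x hx => hP.isStrictlyPositive.spectrum_pos hx
  refine ⟨c, hc, fun v => ?_⟩
  have h := quad_nonneg_s13 (Matrix.le_iff.1 hcP) v
  rw [Algebra.algebraMap_eq_smul_one] at h
  simp only [quad, sub_mulVec, smul_mulVec, one_mulVec, dotProduct_sub, dotProduct_smul,
    smul_eq_mul] at h
  unfold quad
  linarith

lemma pos_of_isGreatest_mul_dotProduct_self_le (hP : P.PosDef) {l : ℝ}
    (hl : IsGreatest {l : ℝ | ∀ v : ι → ℝ, l * (v ⬝ᵥ v) ≤ quad P v} l) : 0 < l := by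
  classical
  rcases isEmpty_or_nonempty ι with hι | hι
  · have : l + 1 ≤ l := hl.2 fun v => by simp [quad, Subsingleton.elim v 0]
    linarith
  · obtain ⟨c, hc, hcP⟩ := hP.exists_pos_mul_dotProduct_self_le
    exact hc.trans_le (hl.2 hcP)

end Matrix.PosDef

section ErrorDynamics

variable {ι κ ν ρ : Type*} [Fintype ι] [Fintype κ] [Fintype ν]
  {x xt xp xtp : ι → ℝ} {w wt : κ → ℝ} {p pt : ν → ℝ} {y yt : ρ → ℝ}
  {A : Matrix ι ι ℝ} {B : Matrix ι κ ℝ} {E : Matrix ι ν ℝ} {C : Matrix ρ ι ℝ}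
  {D : Matrix ρ κ ℝ} {F : Matrix ρ ν ℝ} {L : Matrix ι ρ ℝ} {Y Yp : Matrix ι ν ℝ}

lemma transformed_error_step [Fintype ρ]
    (hx : xp - xtp = A *ᵥ (x - xt) + B *ᵥ (w - wt) + E *ᵥ (p - pt))
    (hy : y - yt = C *ᵥ (x - xt) + D *ᵥ (w - wt) + F *ᵥ (p - pt))
    (hY : Yp = (A + L * C) * Y + E + L * F) :
    (xp - Yp *ᵥ p) - (xtp - Yp *ᵥ pt) = (A + L * C) *ᵥ ((x - Y *ᵥ p) - (xt - Y *ᵥ pt))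
      + ((B + L * D) *ᵥ (w - wt) - L *ᵥ (y - yt)) := by
  have hsplit : (xp - Yp *ᵥ p) - (xtp - Yp *ᵥ pt) = (xp - xtp) - Yp *ᵥ (p - pt) := by
    rw [mulVec_sub]; abel
  rw [hsplit, hx, hY, hy]
  simp only [add_mulVec, mulVec_add, mulVec_sub, ← mulVec_mulVec]
  abel

lemma output_gain_mulVec_eq
    (hy : y - yt = C *ᵥ (x - xt) + D *ᵥ (w - wt) + F *ᵥ (p - pt)) :
    (C * Y + F) *ᵥ (p - pt)
      = (y - yt) + -(D *ᵥ (w - wt)) + -(C *ᵥ ((x - Y *ᵥ p) - (xt - Y *ᵥ pt))) := by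
  rw [hy]
  simp only [add_mulVec, mulVec_sub, ← mulVec_mulVec]
  abel

end ErrorDynamics

theorem one_step_decrease_excitation_lyapunov_general
    {n q o r : ℕ}
    (x xt xp xtp : Fin n → ℝ) (w wt : Fin q → ℝ) (p pt : Fin o → ℝ)
    (y yt : Fin r → ℝ)
    (A : Matrix (Fin n) (Fin n) ℝ) (B : Matrix (Fin n) (Fin q) ℝ)
    (E : Matrix (Fin n) (Fin o) ℝ) (C : Matrix (Fin r) (Fin n) ℝ)
    (D : Matrix (Fin r) (Fin q) ℝ) (F : Matrix (Fin r) (Fin o) ℝ)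
    (L : Matrix (Fin n) (Fin r) ℝ) (Y Yp : Matrix (Fin n) (Fin o) ℝ)
    (P : Matrix (Fin n) (Fin n) ℝ) (hP : P.PosDef)
    (η : ℝ)
    (hx : xp - xtp = A.mulVec (x - xt) + B.mulVec (w - wt) + E.mulVec (p - pt))
    (hy : y - yt = C.mulVec (x - xt) + D.mulVec (w - wt) + F.mulVec (p - pt))
    (hΦ : ((η • P - (A + L * C)ᵀ * P * (A + L * C)) : Matrix (Fin n) (Fin n) ℝ).PosSemidef)
    (Cbar : ℝ) (hC : ∀ v : Fin n → ℝ, euclNorm (C.mulVec v) ≤ Cbar * euclNorm v)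
    (hY : Yp = (A + L * C) * Y + E + L * F)
    (S : Matrix (Fin o) (Fin o) ℝ)
    (ε γ : ℝ) (hε : 0 < ε) (hγ : 0 < γ)
    (lminP : ℝ)
    (hlmin : IsGreatest {l : ℝ | ∀ v : Fin n → ℝ, l * (v ⬝ᵥ v) ≤ quad P v} lminP)
    (μ : ℝ) (hμ : μ = (1 + ε) * η + 3 * γ * Cbar ^ 2 / lminP)
    (Sp : Matrix (Fin o) (Fin o) ℝ)
    (hSp : Sp = μ • S + (C * Y + F)ᵀ * (C * Y + F)) :
    quad P ((xp - Yp.mulVec p) - (xtp - Yp.mulVec pt)) + γ * quad Sp (p - pt)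
      ≤ μ * (quad P ((x - Y.mulVec p) - (xt - Y.mulVec pt)) + γ * quad S (p - pt))
        + (2 * (1 + ε) / ε) *
            (quad P ((B + L * D).mulVec (w - wt)) + quad P (L.mulVec (y - yt)))
        + 3 * γ * ((D.mulVec (w - wt)) ⬝ᵥ (D.mulVec (w - wt)) + (y - yt) ⬝ᵥ (y - yt)) := by
  set Φ := A + L * C
  set z := (x - Y *ᵥ p) - (xt - Y *ᵥ pt)
  have hSp_quad : quad Sp (p - pt) = μ * quad S (p - pt)
      + quad 1 ((y - yt) + -(D *ᵥ (w - wt)) + -(C *ᵥ z)) := by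
    rw [hSp, quad_smul_add_matrix, quad_transpose_mul_self, output_gain_mulVec_eq hy, quad_one]
  rw [transformed_error_step hx hy hY, hSp_quad, hμ]
  set u := (B + L * D) *ᵥ (w - wt)
  set e := L *ᵥ (y - yt)
  have hPsd := hP.posSemidef
  have hCz := dotProduct_mulVec_self_le_div_mul_quad hC
    (hP.pos_of_isGreatest_mul_dotProduct_self_le hlmin) hlmin.1 z
  have hYoung := quad_add_le_s13 hPsd hε (Φ *ᵥ z) (u - e)
  have hue := quad_sub_le hPsd u e
  have hΦz := quad_mulVec_le_of_posSemidef hΦ z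
  have hJensen := quad_add_add_le PosSemidef.one (y - yt) (-(D *ᵥ (w - wt))) (-(C *ᵥ z))
  rw [quad_neg, quad_neg, quad_one (y - yt), quad_one (D *ᵥ _), quad_one (C *ᵥ z)] at hJensen
  calc _ ≤ (1 + ε) * (η * quad P z) + (1 + ε) / ε * (2 * quad P u + 2 * quad P e)
        + γ * (((1 + ε) * η + 3 * γ * Cbar ^ 2 / lminP) * quad S (p - pt)
          + 3 * ((y - yt) ⬝ᵥ (y - yt) + D *ᵥ (w - wt) ⬝ᵥ D *ᵥ (w - wt)
            + Cbar ^ 2 / lminP * quad P z)) := by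
        gcongr
        · exact hYoung.trans (by gcongr)
        · exact hJensen.trans (by gcongr)
    _ = _ := by ring

/-- **One-step decrease of the combined excitation Lyapunov function**
`W := ‖ζ−ζ̃‖²_P + γ‖p−p̃‖²_S` along the transformed error dynamics:
with `Φ := A + LC`, `ΦᵀPΦ ⪯ ηP`, `‖C‖ ≤ C̄`, `Y⁺ = ΦY + E + LF`,
`μ := (1+ε)η + 3γC̄²/λ_min(P)`, `S⁺ := μS + ȲᵀȲ` where `Ȳ := CY + F`, it holds
`W⁺ ≤ μW + (2(1+ε)/ε)(‖(B+LD)(w−w̃)‖²_P + ‖L(y−ỹ)‖²_P) + 3γ(‖D(w−w̃)‖² + ‖y−ỹ‖²)`. -/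
theorem one_step_decrease_excitation_lyapunov
    {n q o r : ℕ}
    (x xt xp xtp : Fin n → ℝ) (w wt : Fin q → ℝ) (p pt : Fin o → ℝ)
    (y yt : Fin r → ℝ)
    (A : Matrix (Fin n) (Fin n) ℝ) (B : Matrix (Fin n) (Fin q) ℝ)
    (E : Matrix (Fin n) (Fin o) ℝ) (C : Matrix (Fin r) (Fin n) ℝ)
    (D : Matrix (Fin r) (Fin q) ℝ) (F : Matrix (Fin r) (Fin o) ℝ)
    (L : Matrix (Fin n) (Fin r) ℝ) (Y Yp : Matrix (Fin n) (Fin o) ℝ)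
    (P : Matrix (Fin n) (Fin n) ℝ) (hP : P.PosDef)
    (η : ℝ) (hη0 : 0 ≤ η) (hη1 : η < 1)
    (hx : xp - xtp = A.mulVec (x - xt) + B.mulVec (w - wt) + E.mulVec (p - pt))
    (hy : y - yt = C.mulVec (x - xt) + D.mulVec (w - wt) + F.mulVec (p - pt))
    (hΦ : ((η • P - (A + L * C)ᵀ * P * (A + L * C)) : Matrix (Fin n) (Fin n) ℝ).PosSemidef)
    (Cbar : ℝ) (hC : ∀ v : Fin n → ℝ, euclNorm (C.mulVec v) ≤ Cbar * euclNorm v)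
    (hY : Yp = (A + L * C) * Y + E + L * F)
    (S : Matrix (Fin o) (Fin o) ℝ) (hS : S.PosSemidef)
    (ε γ : ℝ) (hε : 0 < ε) (hγ : 0 < γ)
    (lminP : ℝ)
    (hlmin : IsGreatest {l : ℝ | ∀ v : Fin n → ℝ, l * (v ⬝ᵥ v) ≤ quad P v} lminP)
    (μ : ℝ) (hμ : μ = (1 + ε) * η + 3 * γ * Cbar ^ 2 / lminP)
    (Sp : Matrix (Fin o) (Fin o) ℝ)
    (hSp : Sp = μ • S + (C * Y + F)ᵀ * (C * Y + F)) :
    quad P ((xp - Yp.mulVec p) - (xtp - Yp.mulVec pt)) + γ * quad Sp (p - pt)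
      ≤ μ * (quad P ((x - Y.mulVec p) - (xt - Y.mulVec pt)) + γ * quad S (p - pt))
        + (2 * (1 + ε) / ε) *
            (quad P ((B + L * D).mulVec (w - wt)) + quad P (L.mulVec (y - yt)))
        + 3 * γ * ((D.mulVec (w - wt)) ⬝ᵥ (D.mulVec (w - wt)) + (y - yt) ⬝ᵥ (y - yt)) :=
  one_step_decrease_excitation_lyapunov_general x xt xp xtp w wt p pt y yt A B E C D F L Y Yp P hP η
    hx hy hΦ Cbar hC hY S ε γ hε hγ lminP hlmin μ hμ Sp hSp
end

section
/- (Time-partition discount inequality) Let N ≥ 1 and κ ≥ 0 be integers, and let k, j, l ∈ ℕ with l ≤ N−1 and i_1, …, i_k ∈ ℕ satisfy j ≤ κ, i_m ≤ κ for all m ∈ [1,k], and t = l + Σ_{m=1}^{k}(i_m+1)N + jN. Let μ, ρ_N, η̃ ∈ [0,1) with μ̄ := max{μ, ρ_N} ∈ (0,1) and η̃ ≤ μ̄, and set μ_κ := μ̄^{1/(κ+1)}. Then: (i) μ^{sN} ≤ μ_κ^{Σ_{m=1}^{s}(i_m+1)N} for every s ∈ [0,k]; and (ii) μ^{kN} η̃^{l}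 ≤ μ_κ^{−κN} μ_κ^{t} (and likewise μ^{kN} η₁^{l} ≤ μ_κ^{−κN} μ_κ^{t} for any η₁ ∈ [0, μ_κ]). -/
/-! Every excited block `(i_m + 1) N` is at most `(κ + 1) N` long and `μ ≤ μ̄ = μ_κ ^ (κ + 1)`,
so each factor `μ ^ N` is dominated by `μ_κ ^ ((i_m + 1) N)`; the remainder `η^l` is dominated by
`μ_κ ^ l`, and the missing trailing factor `μ_κ ^ (j N)` is paid for by `μ_κ ^ (-κ N)` since
`j ≤ κ` and `μ_κ ≤ 1`. -/

open Finset

lemma rpow_one_div_succ_pow {x : ℝ} (hx : 0 ≤ x) (n : ℕ) :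
    (x ^ ((1 : ℝ) / (n + 1))) ^ (n + 1) = x := by
  simpa [one_div] using Real.rpow_inv_natCast_pow hx n.succ_ne_zero

lemma sum_Icc_succ_mul_le {i : ℕ → ℕ} {s κ : ℕ} (hi : ∀ m ∈ Icc 1 s, i m ≤ κ) (N : ℕ) :
    ∑ m ∈ Icc 1 s, (i m + 1) * N ≤ (κ + 1) * (s * N) :=
  calc ∑ m ∈ Icc 1 s, (i m + 1) * N
      ≤ ∑ _m ∈ Icc 1 s, (κ + 1) * N :=
        sum_le_sum fun m hm => Nat.mul_le_mul_right N (Nat.succ_le_succ (hi m hm))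
    _ = (κ + 1) * (s * N) := by simp only [sum_const, Nat.card_Icc, Nat.add_sub_cancel, smul_eq_mul]; ring

lemma pow_le_pow_of_le_pow {μ c : ℝ} {p n e : ℕ} (hμ0 : 0 ≤ μ) (hμ : μ ≤ c ^ p)
    (hc0 : 0 ≤ c) (hc1 : c ≤ 1) (he : e ≤ p * n) : μ ^ n ≤ c ^ e :=
  calc μ ^ n ≤ (c ^ p) ^ n := pow_le_pow_left₀ hμ0 hμ n
    _ = c ^ (p * n) := (pow_mul c p n).symm
    _ ≤ c ^ e := pow_le_pow_of_le_one hc0 hc1 he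

lemma pow_le_inv_pow_mul_pow {c : ℝ} (hc0 : 0 < c) (hc1 : c ≤ 1) {a b d : ℕ}
    (h : b ≤ a + d) : c ^ a ≤ (c ^ d)⁻¹ * c ^ b := by
  rw [inv_mul_eq_div, le_div_iff₀ (pow_pos hc0 d), ← pow_add]
  exact pow_le_pow_of_le_one hc0.le hc1 h

theorem time_partition_discount_inequality_general
    (N κ : ℕ)
    (k j l : ℕ) (i : ℕ → ℕ)
    (hj : j ≤ κ) (hi : ∀ m, 1 ≤ m → m ≤ k → i m ≤ κ)
    (t : ℕ) (ht : t = l + (∑ m ∈ Finset.Icc 1 k, (i m + 1) * N) + j * N)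
    (μ ρN ηt : ℝ)
    (hμ0 : 0 ≤ μ) (hμ1 : μ < 1) (hρ1 : ρN < 1)
    (hηt0 : 0 ≤ ηt)
    (hμbar : 0 < max μ ρN) (hηtle : ηt ≤ max μ ρN)
    (μκ : ℝ) (hμκ : μκ = (max μ ρN) ^ ((1 : ℝ) / (κ + 1))) :
    (∀ s : ℕ, s ≤ k →
        μ ^ (s * N) ≤ μκ ^ (∑ m ∈ Finset.Icc 1 s, (i m + 1) * N))
    ∧ μ ^ (k * N) * ηt ^ l ≤ (μκ ^ (κ * N))⁻¹ * μκ ^ t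
    ∧ ∀ η₁ : ℝ, 0 ≤ η₁ → η₁ ≤ μκ →
        μ ^ (k * N) * η₁ ^ l ≤ (μκ ^ (κ * N))⁻¹ * μκ ^ t := by
  have hμbar1 : max μ ρN ≤ 1 := (max_lt hμ1 hρ1).le
  have hμκ0 : 0 < μκ := hμκ ▸ Real.rpow_pos_of_pos hμbar _
  have hμκ1 : μκ ≤ 1 := hμκ ▸ Real.rpow_le_one hμbar.le hμbar1 (by positivity)
  have hμbar_le : max μ ρN ≤ μκ :=
    hμκ ▸ Real.self_le_rpow_of_le_one hμbar.le hμbar1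
      (div_le_one_of_le₀ (by linarith [κ.cast_nonneg (α := ℝ)]) (by positivity))
  have hμ_le : μ ≤ μκ ^ (κ + 1) := by
    rw [hμκ, rpow_one_div_succ_pow hμbar.le]
    exact le_max_left μ ρN
  have excited : ∀ s : ℕ, s ≤ k →
      μ ^ (s * N) ≤ μκ ^ (∑ m ∈ Finset.Icc 1 s, (i m + 1) * N) := fun s hs =>
    pow_le_pow_of_le_pow hμ0 hμ_le hμκ0.le hμκ1 <| sum_Icc_succ_mul_le
      (fun m hm => hi m (mem_Icc.1 hm).1 ((mem_Icc.1 hm).2.trans hs)) N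
  have total : ∀ η₁ : ℝ, 0 ≤ η₁ → η₁ ≤ μκ →
      μ ^ (k * N) * η₁ ^ l ≤ (μκ ^ (κ * N))⁻¹ * μκ ^ t := fun η₁ hη0 hη =>
    calc μ ^ (k * N) * η₁ ^ l
        ≤ μκ ^ (∑ m ∈ Finset.Icc 1 k, (i m + 1) * N) * μκ ^ l :=
          mul_le_mul (excited k le_rfl) (pow_le_pow_left₀ hη0 hη l) (by positivity)
            (by positivity)
      _ ≤ (μκ ^ (κ * N))⁻¹ * μκ ^ t := by
          rw [← pow_add]
          refine pow_le_inv_pow_mul_pow hμκ0 hμκ1 ?_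
          have := Nat.mul_le_mul_right N hj
          omega
  exact ⟨excited, total ηt hηt0 (hηtle.trans hμbar_le), total⟩

/-- **Time-partition discount inequality.**
Let `t = l + Σ_{m=1}^{k}(i_m+1)N + jN` with `l ≤ N−1`, `j ≤ κ`, `i_m ≤ κ`,
`μ, ρ_N, η̃ ∈ [0,1)`, `μ̄ := max{μ,ρ_N} ∈ (0,1)`, `η̃ ≤ μ̄` and `μ_κ := μ̄^{1/(κ+1)}`. Then
(i) `μ^{sN} ≤ μ_κ^{Σ_{m=1}^{s}(i_m+1)N}` for all `s ≤ k`, and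
(ii) `μ^{kN} η̃^{l} ≤ μ_κ^{−κN} μ_κ^{t}`, and likewise with `η̃` replaced by any
`η₁ ∈ [0, μ_κ]`. -/
theorem time_partition_discount_inequality
    (N κ : ℕ) (hN : 1 ≤ N)
    (k j l : ℕ) (hl : l ≤ N - 1) (i : ℕ → ℕ)
    (hj : j ≤ κ) (hi : ∀ m, 1 ≤ m → m ≤ k → i m ≤ κ)
    (t : ℕ) (ht : t = l + (∑ m ∈ Finset.Icc 1 k, (i m + 1) * N) + j * N)
    (μ ρN ηt : ℝ)
    (hμ0 : 0 ≤ μ) (hμ1 : μ < 1) (hρ0 : 0 ≤ ρN) (hρ1 : ρN < 1)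
    (hηt0 : 0 ≤ ηt) (hηt1 : ηt < 1)
    (hμbar : 0 < max μ ρN) (hηtle : ηt ≤ max μ ρN)
    (μκ : ℝ) (hμκ : μκ = (max μ ρN) ^ ((1 : ℝ) / (κ + 1))) :
    (∀ s : ℕ, s ≤ k →
        μ ^ (s * N) ≤ μκ ^ (∑ m ∈ Finset.Icc 1 s, (i m + 1) * N))
    ∧ μ ^ (k * N) * ηt ^ l ≤ (μκ ^ (κ * N))⁻¹ * μκ ^ t
    ∧ ∀ η₁ : ℝ, 0 ≤ η₁ → η₁ ≤ μκ →
        μ ^ (k * N) * η₁ ^ l ≤ (μκ ^ (κ * N))⁻¹ * μκ ^ t :=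
  time_partition_discount_inequality_general N κ k j l i hj hi t ht μ ρN ηt hμ0 hμ1 hρ1 hηt0 hμbar
    hηtle μκ hμκ
end
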